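/- arXiv:1810.04300 — 7 statements merged into one kernel-verified Lean document; each statement's English description precedes it below -/
import Mathlib

section
/- Solution of the Stein equation for the scaled Poisson distribution: let λ > 0, let m be a positive integer, and let h be a bounded real-valued function on the lattice m·ℤ≥0. Define f_h(w) = −Σ_{j=0}^∞ (λm)^j / (∏_{ℓ=0}^j (w + mℓ)) · [h(w + mj) − E h(Â_λ)] for real w > 0 (the series converges absolutely). Then f_h satisfies λ·m·f_h(w + m) − w·f_h(w) = h(w) − E h(Â_λ) for every real w > 0. -/
/-! Writing `P_j(w) = ∏_{ℓ ≤ j} (w + mℓ)`, we have `P_{j+1}(w) = w · P_j(w + m)`, so `λm` times the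
`j`-th term of the series at `w + m` is `w` times its `(j+1)`-st term at `w`: the two series in the
Stein equation telescope to the `j = 0` term `(h(w) − Eh) / w`.
Absolute convergence comes from `P_j(w) ≥ w · m^j · j!`, which dominates the series by
`exp |λ|`. -/

open Finset Nat

namespace ScaledPoisson

/-- `d` stands for the centred test function `h − E h(Â_λ)`. -/
noncomputable def steinTerm (lam m : ℝ) (d : ℝ → ℝ) (w : ℝ) (j : ℕ) : ℝ :=
  (lam * m) ^ j / (∏ ℓ ∈ range (j + 1), (w + m * ℓ)) * d (w + m * j)

variable {lam m : ℝ} {d : ℝ → ℝ} {w : ℝ}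

theorem prod_add_mul_pos (hw : 0 < w) (hm : 0 ≤ m) (n : ℕ) :
    0 < ∏ ℓ ∈ range n, (w + m * ℓ) :=
  prod_pos fun _ _ => by positivity

theorem mul_pow_mul_factorial_le_prod (hw : 0 ≤ w) (hm : 0 ≤ m) (j : ℕ) :
    w * (m ^ j * j !) ≤ ∏ ℓ ∈ range (j + 1), (w + m * ℓ) := by
  induction j with
  | zero => simp
  | succ j ih =>
    rw [prod_range_succ]
    calc w * (m ^ (j + 1) * (j + 1)!) = w * (m ^ j * j !) * (m * (j + 1 : ℕ)) := by
          push_cast [Nat.factorial_succ]; ring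
      _ ≤ (∏ ℓ ∈ range (j + 1), (w + m * ℓ)) * (w + m * (j + 1 : ℕ)) := by
          gcongr; linarith

theorem abs_steinTerm_le {D : ℝ} (hd : ∀ x, |d x| ≤ D) (hw : 0 < w) (hm : 0 ≤ m) (j : ℕ) :
    |steinTerm lam m d w j| ≤ D / w * (|lam| ^ j / j !) := by
  have hP := prod_add_mul_pos hw hm (j + 1)
  have hratio : m ^ j / ∏ ℓ ∈ range (j + 1), (w + m * ℓ) ≤ 1 / (w * j !) := by
    rw [div_le_div_iff₀ hP (by positivity)]
    linarith [mul_pow_mul_factorial_le_prod hw.le hm j]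
  calc |steinTerm lam m d w j|
      = |lam| ^ j * (m ^ j / ∏ ℓ ∈ range (j + 1), (w + m * ℓ)) * |d (w + m * j)| := by
        rw [steinTerm, abs_mul, abs_div, abs_of_pos hP, abs_pow, abs_mul, abs_of_nonneg hm]
        ring
    _ ≤ |lam| ^ j * (1 / (w * j !)) * D := by gcongr; exact hd _
    _ = D / w * (|lam| ^ j / j !) := by field_simp

theorem summable_abs_steinTerm {D : ℝ} (hd : ∀ x, |d x| ≤ D) (hw : 0 < w) (hm : 0 ≤ m) :
    Summable fun j => |steinTerm lam m d w j| :=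
  ((Real.summable_pow_div_factorial |lam|).mul_left (D / w)).of_nonneg_of_le
    (fun _ => abs_nonneg _) (abs_steinTerm_le hd hw hm)

theorem steinTerm_zero : steinTerm lam m d w 0 = d w / w := by
  simp [steinTerm, div_eq_inv_mul]

theorem prod_range_succ_add_mul_shift (w m : ℝ) (j : ℕ) :
    ∏ ℓ ∈ range (j + 2), (w + m * ℓ) = (∏ ℓ ∈ range (j + 1), (w + m + m * ℓ)) * w := by
  rw [prod_range_succ']
  congr 1
  · exact prod_congr rfl fun ℓ _ => by push_cast; ring
  · simp

theorem mul_steinTerm_add (hw : w ≠ 0) (j : ℕ) :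
    lam * m * steinTerm lam m d (w + m) j = w * steinTerm lam m d w (j + 1) := by
  have harg : w + m + m * j = w + m * (j + 1 : ℕ) := by push_cast; ring
  rw [steinTerm, steinTerm, prod_range_succ_add_mul_shift, harg, pow_succ]
  field_simp

theorem stein_equation (hw : w ≠ 0) (hs : Summable (steinTerm lam m d w)) :
    lam * m * -∑' j, steinTerm lam m d (w + m) j - w * -∑' j, steinTerm lam m d w j = d w := by
  have htel : lam * m * ∑' j, steinTerm lam m d (w + m) j =
      w * ∑' j, steinTerm lam m d w (j + 1) := by
    rw [← tsum_mul_left, ← tsum_mul_left]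
    exact tsum_congr (mul_steinTerm_add hw)
  rw [mul_neg, htel, hs.tsum_eq_zero_add, steinTerm_zero]
  field_simp
  ring

end ScaledPoisson

theorem scaled_poisson_stein_solution_general
    (lam : ℝ) (m : ℕ)
    (h : ℝ → ℝ) (hbdd : ∃ B : ℝ, ∀ x : ℝ, |h x| ≤ B)
    (Eh : ℝ)
    (fh : ℝ → ℝ)
    (hfh : ∀ w : ℝ, fh w =
      -∑' j : ℕ, (lam * m) ^ j / (∏ ℓ ∈ Finset.range (j + 1), (w + (m : ℝ) * ℓ)) *
        (h (w + (m : ℝ) * j) - Eh)) :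
    ∀ w : ℝ, 0 < w →
      (Summable fun j : ℕ =>
        |(lam * m) ^ j / (∏ ℓ ∈ Finset.range (j + 1), (w + (m : ℝ) * ℓ)) *
          (h (w + (m : ℝ) * j) - Eh)|) ∧
      lam * m * fh (w + m) - w * fh w = h w - Eh := by
  intro w hw
  obtain ⟨B, hB⟩ := hbdd
  have hd : ∀ x, |h x - Eh| ≤ B + |Eh| := fun x => (abs_sub _ _).trans (by linarith [hB x])
  have hsum := ScaledPoisson.summable_abs_steinTerm (lam := lam) hd hw (Nat.cast_nonneg m)
  refine ⟨hsum, ?_⟩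
  rw [hfh, hfh]
  exact ScaledPoisson.stein_equation hw.ne' hsum.of_abs

/-- **Solution of the Stein equation for the scaled Poisson distribution.**
Let `λ > 0`, let `m` be a positive integer, and let `h` be a bounded real-valued function
(on the lattice `m·ℤ≥0`, extended to the reals since the series below evaluates `h` at
translates of an arbitrary real `w > 0`).  Let `Eh = E h(Â_λ)` where `Â_λ = m·A_λ` and
`A_λ` is Poisson with mean `λ`.  Define
`f_h(w) = −Σ_{j=0}^∞ (λm)^j / (∏_{ℓ=0}^j (w + mℓ)) · [h(w + mj) − Eh]` for real `w > 0`.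
Then the series converges absolutely and `f_h` satisfies
`λ·m·f_h(w + m) − w·f_h(w) = h(w) − Eh` for every real `w > 0`. -/
theorem scaled_poisson_stein_solution
    (lam : ℝ) (hlam : 0 < lam) (m : ℕ) (hm : 0 < m)
    (h : ℝ → ℝ) (hbdd : ∃ B : ℝ, ∀ x : ℝ, |h x| ≤ B)
    (Eh : ℝ)
    (hEh : Eh = ∑' j : ℕ, Real.exp (-lam) * lam ^ j / (Nat.factorial j) * h ((m : ℝ) * j))
    (fh : ℝ → ℝ)
    (hfh : ∀ w : ℝ, fh w =
      -∑' j : ℕ, (lam * m) ^ j / (∏ ℓ ∈ Finset.range (j + 1), (w + (m : ℝ) * ℓ)) *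
        (h (w + (m : ℝ) * j) - Eh)) :
    ∀ w : ℝ, 0 < w →
      (Summable fun j : ℕ =>
        |(lam * m) ^ j / (∏ ℓ ∈ Finset.range (j + 1), (w + (m : ℝ) * ℓ)) *
          (h (w + (m : ℝ) * j) - Eh)|) ∧
      lam * m * fh (w + m) - w * fh w = h w - Eh :=
  scaled_poisson_stein_solution_general lam m h hbdd Eh fh hfh
end

section
/- Decomposition of the Stein expectation: with h(w) = 1{w ≥ my} for a positive integer y and f_h the Stein solution for h, one has E[h(nW)] − E[h(Â_λ)] = λ·m·E[f_h(nW + m) − f_h(nW^s)] = H₀ + H₁ + ⋯ + H_R. -/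
/-- `poissonTail lam y = P(A_λ ≥ y)`, the upper tail of a Poisson random variable `A_λ`
with mean `lam`.  Equivalently `P(Â_λ ≥ m·y)` for the scaled Poisson variable `Â_λ = m·A_λ`. -/
noncomputable def poissonTail (lam : ℝ) (y : ℕ) : ℝ :=
  ∑' j : ℕ, if y ≤ j then Real.exp (-lam) * lam ^ j / (Nat.factorial j) else 0

/-- The solution `f_h` of the Stein equation for the scaled Poisson distribution `Â_λ = m·A_λ`
associated with the metric function `h(w) = 1{w ≥ m·y}`:
`f_h(w) = −Σ_{j=0}^∞ (λm)^j / (∏_{ℓ=0}^j (w + mℓ)) · [h(w + mj) − P(Â_λ ≥ m·y)]`. -/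
noncomputable def fh (lam : ℝ) (m y : ℕ) (w : ℝ) : ℝ :=
  -∑' j : ℕ, (lam * m) ^ j / (∏ ℓ ∈ Finset.range (j + 1), (w + (m : ℝ) * ℓ)) *
      ((if (m : ℝ) * y ≤ w + (m : ℝ) * j then (1 : ℝ) else 0) - poissonTail lam y)

/-!
On natural numbers the Stein solution satisfies `λm f_h(w + m) − w f_h(w) = h(w) − P(A_λ ≥ y)`:
for `w > 0` the series for `λm f_h(w + m)` is, term by term, the series for `w f_h(w)` without
its first term `h(w) − P(A_λ ≥ y)`, and at `w = 0` the identity is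
`Σ_j λ^j/j! (1{j ≥ y} − P(A_λ ≥ y)) = 0`. Evaluating at `nW` and taking expectations leaves
`E[nW f_h(nW)]`, which the size-bias identity `E[W g(W)] = μ E[g(W^s)]` turns into
`nμ E[f_h(nW^s)] = λm E[f_h(nW^s)]` (as `λ = nμ/m`). The size-bias identity holds because each
Bernoulli variable is independent of the sum of the others and `I` is independent of the whole
family. Finally `W^s = W` when `X_I = 1` and `W^s = W + b_I` when `X_I = 0`, so `Δ` only takes
the values `m` and `m − n b_r`, which are pairwise distinct because `b` is injective and
positive; splitting the expectation along these values gives `H₀ + H₁ + ⋯ + H_R`.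
-/

open Finset MeasureTheory ProbabilityTheory

lemma mul_pow_mul_factorial_le_prod {w a : ℝ} (hw : 0 ≤ w) (ha : 0 ≤ a) (j : ℕ) :
    w * (a ^ j * j.factorial) ≤ ∏ ℓ ∈ range (j + 1), (w + a * ℓ) := by
  induction j with
  | zero => simp
  | succ j ih =>
    rw [prod_range_succ _ (j + 1)]
    calc w * (a ^ (j + 1) * (j + 1).factorial)
        = w * (a ^ j * j.factorial) * (a * (j + 1)) := by
          push_cast [Nat.factorial_succ]; ring
      _ ≤ (∏ ℓ ∈ range (j + 1), (w + a * ℓ)) * (w + a * ((j + 1 : ℕ) : ℝ)) := by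
          gcongr
          push_cast; linarith

lemma summable_pow_div_prod_mul {w a : ℝ} (hw : 0 < w) (ha : 0 < a) (lam : ℝ) {c : ℕ → ℝ}
    {C : ℝ} (hc : ∀ j, |c j| ≤ C) :
    Summable fun j => (lam * a) ^ j / (∏ ℓ ∈ range (j + 1), (w + a * ℓ)) * c j := by
  refine Summable.of_norm_bounded ((Real.summable_pow_div_factorial |lam|).mul_left (C / w))
    fun j => ?_
  have hprod := mul_pow_mul_factorial_le_prod hw.le ha.le j
  have hpos : 0 < ∏ ℓ ∈ range (j + 1), (w + a * ℓ) := (by positivity : (0:ℝ) < _).trans_le hprod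
  rw [Real.norm_eq_abs, abs_mul, abs_div, abs_of_pos hpos, abs_pow, abs_mul, abs_of_pos ha]
  calc (|lam| * a) ^ j / (∏ ℓ ∈ range (j + 1), (w + a * ℓ)) * |c j|
      ≤ (|lam| * a) ^ j / (w * (a ^ j * j.factorial)) * C := by
        gcongr
        exact hc j
      _ = C / w * (|lam| ^ j / j.factorial) := by
        field_simp
        ring

lemma hasSum_pow_div_factorial_mul_indicator_sub_poissonTail (lam : ℝ) (y : ℕ) :
    HasSum (fun j => lam ^ j / j.factorial *
      ((if y ≤ j then (1 : ℝ) else 0) - poissonTail lam y)) 0 := by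
  have hexp : HasSum (fun j => lam ^ j / j.factorial) (Real.exp lam) := by
    simpa [Real.exp_eq_exp_ℝ] using NormedSpace.expSeries_div_hasSum_exp lam
  have htail : HasSum (fun j => if y ≤ j then lam ^ j / j.factorial else 0)
      (Real.exp lam * poissonTail lam y) := by
    have hsum : Summable fun j => if y ≤ j then lam ^ j / j.factorial else 0 := by
      refine (hexp.summable.indicator {j | y ≤ j}).congr fun j => ?_
      simp [Set.indicator_apply]
    convert hsum.hasSum using 1
    rw [poissonTail, ← tsum_mul_left]
    refine tsum_congr fun j => ?_
    split_ifs
    · rw [mul_div_assoc, ← mul_assoc, ← Real.exp_add, add_neg_cancel, Real.exp_zero, one_mul]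
    · rw [mul_zero]
  have h := htail.sub (hexp.mul_left (poissonTail lam y))
  rw [mul_comm, sub_self] at h
  refine h.congr_fun fun j => ?_
  split_ifs <;> ring

section Stein

variable {lam : ℝ} {m : ℕ} (y : ℕ)

lemma prod_range_succ_add_mul_eq (w a : ℝ) (j : ℕ) :
    ∏ ℓ ∈ range (j + 2), (w + a * ℓ) = w * ∏ ℓ ∈ range (j + 1), ((w + a) + a * ℓ) := by
  rw [prod_range_succ', mul_comm]
  push_cast
  simp only [mul_zero, add_zero]
  exact congrArg _ (prod_congr rfl fun ℓ _ => by ring)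

lemma fh_stein_of_pos (hm : 0 < m) {w : ℝ} (hw : 0 < w) :
    lam * m * fh lam m y (w + m) - w * fh lam m y w =
      (if (m : ℝ) * y ≤ w then 1 else 0) - poissonTail lam y := by
  set c : ℕ → ℝ := fun j => w * ((lam * m) ^ j / (∏ ℓ ∈ range (j + 1), (w + m * ℓ)) *
    ((if (m : ℝ) * y ≤ w + m * j then 1 else 0) - poissonTail lam y))
  have hc : Summable c := by
    refine (summable_pow_div_prod_mul hw (Nat.cast_pos.2 hm) lam (C := 1 + |poissonTail lam y|)
      fun j => ?_).mul_left w
    split_ifs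
    · exact (abs_sub _ _).trans (by rw [abs_one])
    · simp
  have hshift : lam * m * fh lam m y (w + m) = -∑' j, c (j + 1) := by
    rw [fh, mul_neg, ← tsum_mul_left]
    congr 1
    refine tsum_congr fun j => ?_
    rw [show w + m + (m : ℝ) * j = w + m * ((j + 1 : ℕ) : ℝ) by push_cast; ring]
    simp only [c, prod_range_succ_add_mul_eq]
    field_simp
    ring
  have hc0 : c 0 = (if (m : ℝ) * y ≤ w then 1 else 0) - poissonTail lam y := by
    simp [c, hw.ne']
  rw [hshift, fh, mul_neg, ← tsum_mul_left, hc.tsum_eq_zero_add, hc0]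
  ring

lemma fh_stein_zero (hm : 0 < m) :
    lam * m * fh lam m y m = (if y = 0 then 1 else 0) - poissonTail lam y := by
  set s : ℕ → ℝ := fun j => lam ^ j / j.factorial * ((if y ≤ j then 1 else 0) - poissonTail lam y)
  have hm' : (0 : ℝ) < m := Nat.cast_pos.2 hm
  have hshift : lam * m * fh lam m y m = -∑' j, s (j + 1) := by
    rw [fh, mul_neg, ← tsum_mul_left]
    congr 1
    refine tsum_congr fun j => ?_
    have hprod : ∏ ℓ ∈ range (j + 1), ((m : ℝ) + m * ℓ) = m ^ (j + 1) * (j + 1).factorial := by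
      calc ∏ ℓ ∈ range (j + 1), ((m : ℝ) + m * ℓ)
          = ∏ ℓ ∈ range (j + 1), ((m : ℝ) * ((ℓ + 1 : ℕ) : ℝ)) :=
            prod_congr rfl fun ℓ _ => by push_cast; ring
        _ = _ := by
          rw [prod_mul_distrib, prod_const, card_range, ← Nat.cast_prod,
            prod_range_add_one_eq_factorial]
    have hind : (m : ℝ) * y ≤ m + m * j ↔ y ≤ j + 1 := by
      rw [show (m : ℝ) + m * j = m * ((j + 1 : ℕ) : ℝ) by push_cast; ring,
        mul_le_mul_iff_right₀ hm', Nat.cast_le]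
    simp only [s, hprod, hind]
    field_simp
    ring
  have htail := (hasSum_nat_add_iff' 1).2
    (hasSum_pow_div_factorial_mul_indicator_sub_poissonTail lam y)
  rw [sum_range_one, zero_sub] at htail
  rw [hshift, htail.tsum_eq]
  simp

lemma fh_stein_nat (hm : 0 < m) (w : ℕ) :
    lam * m * fh lam m y ((w + m : ℕ) : ℝ) - w * fh lam m y w =
      (if m * y ≤ w then 1 else 0) - poissonTail lam y := by
  have hcast : (m : ℝ) * y ≤ w ↔ m * y ≤ w := by exact_mod_cast Iff.rfl
  rcases w.eq_zero_or_pos with rfl | hw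
  · simpa [hm.ne'] using fh_stein_zero (lam := lam) y hm
  · simpa [hcast] using fh_stein_of_pos (lam := lam) y hm (Nat.cast_pos.2 hw)

end Stein

lemma sum_sigma_prod_fin {α β M : Type*} [Fintype α] [Fintype β] [AddCommMonoid M]
    (k : α → ℕ) (f : α × β → M) :
    ∑ i : (a : α) × (β × Fin (k a)), f (i.1, i.2.1) = ∑ p : α × β, k p.1 • f p := by
  simp [Fintype.sum_sigma, Fintype.sum_prod_type]

lemma sum_sum_ite_and_eq_sum_erase {α β M : Type*} [Fintype α] [Fintype β] [DecidableEq α]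
    [DecidableEq β] [AddCommMonoid M] (f : α → β → M) (a : α) (c : β) :
    ∑ r, ∑ j, (if r = a ∧ j = c then 0 else f r j) = ∑ q ∈ univ.erase (a, c), f q.1 q.2 := by
  rw [← Fintype.sum_prod_type' (f := fun r j => if r = a ∧ j = c then 0 else f r j),
    ← filter_ne', sum_filter]
  refine sum_congr rfl fun q _ => ?_
  simp only [ne_eq, ite_not, Prod.ext_iff]

lemma sum_mul_le_sum {ι : Type*} [Fintype ι] (b : ι → ℕ) {x : ι → ℕ} (hx : ∀ q, x q ≤ 1) :
    ∑ q, b q * x q ≤ ∑ q, b q :=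
  sum_le_sum fun q _ => mul_le_of_le_one_right (Nat.zero_le _) (hx q)

lemma sum_erase_mul_add_le {ι : Type*} [Fintype ι] [DecidableEq ι] (b : ι → ℕ) {x : ι → ℕ}
    (hx : ∀ q, x q ≤ 1) (p : ι) : ∑ q ∈ univ.erase p, b q * x q + b p ≤ ∑ q, b q := by
  rw [← sum_erase_add _ _ (mem_univ p)]
  gcongr with q
  exact mul_le_of_le_one_right (Nat.zero_le _) (hx q)

lemma sum_mul_comp_sum_eq_sum_mul_comp_erase {ι : Type*} [Fintype ι] [DecidableEq ι] (b : ι → ℕ)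
    {x : ι → ℕ} (hx : ∀ q, x q ≤ 1) (g : ℕ → ℝ) :
    ((∑ p, b p * x p : ℕ) : ℝ) * g (∑ p, b p * x p) =
      ∑ p, ((b p * x p : ℕ) : ℝ) * g (∑ q ∈ univ.erase p, b q * x q + b p) := by
  rw [Nat.cast_sum, sum_mul]
  refine sum_congr rfl fun p _ => ?_
  rcases Nat.le_one_iff_eq_zero_or_eq_one.1 (hx p) with h | h
  · simp [h]
  · rw [← add_sum_erase _ _ (mem_univ p), h, mul_one, add_comm (b p)]

instance Sigma.instMeasurableSingletonClass {α : Type*} {β : α → Type*}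
    [∀ a, MeasurableSpace (β a)] [∀ a, MeasurableSingletonClass (β a)] :
    MeasurableSingletonClass (Sigma β) :=
  ⟨fun _ => MeasurableSpace.measurableSet_iInf.2 fun _ =>
    (Set.subsingleton_singleton.preimage sigma_mk_injective).measurableSet⟩

section Probability

variable {Ω : Type*} [MeasurableSpace Ω] {P : Measure Ω}

lemma integrable_comp_of_le [IsFiniteMeasure P] {V : Ω → ℕ} (hV : Measurable V) {B : ℕ}
    (hVB : ∀ ω, V ω ≤ B) (g : ℕ → ℝ) : Integrable (fun ω => g (V ω)) P :=
  .of_bound (Measurable.of_discrete.comp hV).aestronglyMeasurable (∑ k ∈ range (B + 1), ‖g k‖)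
    (ae_of_all _ fun ω => single_le_sum (f := fun k => ‖g k‖) (fun _ _ => norm_nonneg _)
      (mem_range.2 (Nat.lt_succ_of_le (hVB ω))))

lemma integral_ite_one_zero {p : Ω → Prop} [DecidablePred p] (hp : MeasurableSet {ω | p ω}) :
    ∫ ω, (if p ω then (1 : ℝ) else 0) ∂P = P.real {ω | p ω} := by
  rw [← integral_indicator_one hp]
  simp [Set.indicator_apply]

lemma measureReal_sub_poissonTail_eq_integral [IsProbabilityMeasure P] {lam : ℝ} {m y : ℕ}
    (hm : 0 < m) {V : Ω → ℕ} (hV : Measurable V) {B : ℕ} (hVB : ∀ ω, V ω ≤ B) :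
    P.real {ω | m * y ≤ V ω} - poissonTail lam y =
      lam * m * ∫ ω, fh lam m y ((V ω + m : ℕ) : ℝ) ∂P - ∫ ω, (V ω : ℝ) * fh lam m y (V ω) ∂P := by
  have hint := integrable_comp_of_le (P := P) hV hVB
  rw [← integral_ite_one_zero (p := fun ω => m * y ≤ V ω) (hV measurableSet_Ici),
    ← integral_const_mul,
    ← integral_sub (hint fun k => lam * m * fh lam m y ((k + m : ℕ) : ℝ))
      (hint fun k => (k : ℝ) * fh lam m y k)]
  calc (∫ ω, (if m * y ≤ V ω then (1 : ℝ) else 0) ∂P) - poissonTail lam y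
      = ∫ ω, ((if m * y ≤ V ω then (1 : ℝ) else 0) - poissonTail lam y) ∂P := by
        rw [integral_sub (hint fun k => if m * y ≤ k then 1 else 0) (integrable_const _),
          integral_const, probReal_univ, one_smul]
    _ = _ := integral_congr_ae (ae_of_all _ fun ω => (fh_stein_nat y hm (V ω)).symm)

lemma integral_sum_mul_comp_sum_eq [IsFiniteMeasure P] {ι : Type*} [Fintype ι] [DecidableEq ι]
    {X : ι → Ω → ℕ} (hXmeas : ∀ p, Measurable (X p)) (hX01 : ∀ p ω, X p ω ≤ 1)
    (hXindep : iIndepFun X P) (b : ι → ℕ) (g : ℕ → ℝ) :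
    ∫ ω, ((∑ p, b p * X p ω : ℕ) : ℝ) * g (∑ p, b p * X p ω) ∂P =
      ∑ p, b p * P.real {ω | X p ω = 1} * ∫ ω, g (∑ q ∈ univ.erase p, b q * X q ω + b p) ∂P := by
  have hbX : ∀ p, Measurable fun ω => b p * X p ω := fun p => (hXmeas p).const_mul _
  have hrest : ∀ p, Measurable fun ω => ∑ q ∈ univ.erase p, b q * X q ω + b p :=
    fun p => (Finset.measurable_sum _ fun q _ => hbX q).add_const _
  have hrest_le : ∀ p ω, ∑ q ∈ univ.erase p, b q * X q ω + b p ≤ ∑ q, b q :=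
    fun p ω => sum_erase_mul_add_le b (fun q => hX01 q ω) p
  have hbX_le : ∀ p ω, b p * X p ω ≤ b p :=
    fun p ω => mul_le_of_le_one_right (Nat.zero_le _) (hX01 p ω)
  have hindep : ∀ p, IndepFun (fun ω => ((b p * X p ω : ℕ) : ℝ))
      (fun ω => g (∑ q ∈ univ.erase p, b q * X q ω + b p)) P := by
    intro p
    have h := ((hXindep.comp (fun q k => b q * k) fun q => measurable_of_countable _
      ).indepFun_finsetSum_of_notMem hbX (notMem_erase p univ)).symm.comp
      (φ := fun k : ℕ => (k : ℝ)) (ψ := fun k => g (k + b p))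
      Measurable.of_discrete Measurable.of_discrete
    convert h using 1 <;> ext ω <;> simp [Finset.sum_apply]
  have hmean : ∀ p, ∫ ω, ((b p * X p ω : ℕ) : ℝ) ∂P = b p * P.real {ω | X p ω = 1} := by
    intro p
    rw [← integral_ite_one_zero (p := fun ω => X p ω = 1) ((hXmeas p) (measurableSet_singleton 1)),
      ← integral_const_mul]
    refine integral_congr_ae (ae_of_all _ fun ω => ?_)
    rcases Nat.le_one_iff_eq_zero_or_eq_one.1 (hX01 p ω) with h | h <;> simp [h]
  rw [integral_congr_ae (ae_of_all _ fun ω =>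
    sum_mul_comp_sum_eq_sum_mul_comp_erase b (fun p => hX01 p ω) g), integral_finsetSum]
  · refine sum_congr rfl fun p _ => ?_
    rw [← hmean, ← (hindep p).integral_mul_eq_mul_integral
      (Measurable.of_discrete.comp (hbX p)).aestronglyMeasurable
      (Measurable.of_discrete.comp (hrest p)).aestronglyMeasurable]
    rfl
  · exact fun p _ => (hindep p).integrable_mul
      (integrable_comp_of_le (hbX p) (hbX_le p) _)
      (integrable_comp_of_le (hrest p) (hrest_le p) g)

lemma integral_comp_index_eq_sum [IsFiniteMeasure P] {κ β : Type*} [Fintype κ] [DecidableEq κ]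
    [MeasurableSpace κ] [MeasurableSingletonClass κ] [MeasurableSpace β] {I : Ω → κ} {Y : Ω → β}
    (hI : Measurable I) (hIY : IndepFun I Y P) {F : κ → β → ℝ} (hF : ∀ i, Measurable (F i))
    (hFint : ∀ i, Integrable (fun ω => F i (Y ω)) P) :
    ∫ ω, F (I ω) (Y ω) ∂P = ∑ i, P.real {ω | I ω = i} * ∫ ω, F i (Y ω) ∂P := by
  have hindep : ∀ i, IndepFun (fun ω => if I ω = i then (1 : ℝ) else 0) (fun ω => F i (Y ω)) P :=
    fun i => hIY.comp (φ := fun k => if k = i then (1 : ℝ) else 0) (measurable_of_countable _)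
      (hF i)
  have hind : ∀ i, Measurable fun ω => if I ω = i then (1 : ℝ) else 0 :=
    fun i => (measurable_of_countable (fun k => if k = i then (1 : ℝ) else 0)).comp hI
  have hpt : ∀ ω, F (I ω) (Y ω) = ∑ i, (if I ω = i then (1 : ℝ) else 0) * F i (Y ω) := by
    simp
  have hset : ∀ i, MeasurableSet {ω | I ω = i} := fun i => hI (measurableSet_singleton i)
  rw [integral_congr_ae (ae_of_all _ hpt), integral_finsetSum]
  · refine sum_congr rfl fun i _ => ?_
    rw [← integral_ite_one_zero (hset i), ← (hindep i).integral_mul_eq_mul_integral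
      (hind i).aestronglyMeasurable (hFint i).aestronglyMeasurable]
    rfl
  · exact fun i _ => (hindep i).integrable_mul
      (.of_bound (hind i).aestronglyMeasurable 1 (ae_of_all _ fun ω => by split_ifs <;> simp))
      (hFint i)

lemma integral_eq_integral_ite_add_sum_integral_ite [IsFiniteMeasure P] {ι : Type*} [Fintype ι]
    {D : Ω → ℤ} (hD : Measurable D) {z₀ : ℤ} {z : ι → ℤ} (hz : Function.Injective z)
    (hz₀ : ∀ i, z i ≠ z₀) (hDz : ∀ ω, D ω = z₀ ∨ ∃ i, D ω = z i) {f : Ω → ℝ}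
    (hf : Integrable f P) :
    ∫ ω, f ω ∂P = ∫ ω, (if D ω = z₀ then f ω else 0) ∂P +
      ∑ i, ∫ ω, (if D ω = z i then f ω else 0) ∂P := by
  have hpiece : ∀ c, Integrable (fun ω => if D ω = c then f ω else 0) P := fun c =>
    (hf.indicator (hD (measurableSet_singleton c))).congr
      (ae_of_all _ fun ω => by by_cases h : D ω = c <;> simp [h])
  have hpt : ∀ ω, f ω = (if D ω = z₀ then f ω else 0) + ∑ i, if D ω = z i then f ω else 0 := by
    intro ω
    classical
    rcases hDz ω with h | ⟨i, h⟩ <;> simp [h, hz₀, hz.eq_iff, Ne.symm (hz₀ _)]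
  rw [integral_congr_ae (ae_of_all _ hpt), integral_add (hpiece z₀)
    (integrable_finsetSum _ fun i _ => hpiece (z i)), integral_finsetSum _ fun i _ => hpiece (z i)]

lemma measureReal_sub_poissonTail_eq_integral_sizeBiased [IsProbabilityMeasure P] {lam μ : ℝ}
    {n m y : ℕ} (hm : 0 < m) (hlm : lam * m = n * μ) {W Ws : Ω → ℕ} (hW : Measurable W)
    (hWs : Measurable Ws) {B : ℕ} (hWB : ∀ ω, W ω ≤ B) (hWsB : ∀ ω, Ws ω ≤ B)
    (hsb : ∀ g : ℕ → ℝ, ∫ ω, (W ω : ℝ) * g (W ω) ∂P = μ * ∫ ω, g (Ws ω) ∂P) :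
    P.real {ω | m * y ≤ n * W ω} - poissonTail lam y =
      lam * m * ∫ ω, (fh lam m y ((n * W ω + m : ℕ) : ℝ) - fh lam m y ((n * Ws ω : ℕ) : ℝ)) ∂P := by
  have hnW : ∀ ω, n * W ω ≤ n * B := fun ω => Nat.mul_le_mul_left n (hWB ω)
  rw [measureReal_sub_poissonTail_eq_integral hm (hW.const_mul n) hnW,
    integral_sub (integrable_comp_of_le (hW.const_mul n) hnW fun k => fh lam m y ((k + m : ℕ) : ℝ))
      (integrable_comp_of_le hWs hWsB fun k => fh lam m y ((n * k : ℕ) : ℝ)), mul_sub]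
  congr 1
  have h := hsb fun k => fh lam m y ((n * k : ℕ) : ℝ)
  beta_reduce at h
  rw [hlm, mul_assoc, ← h, ← integral_const_mul]
  congr 1 with ω
  rw [Nat.cast_mul, mul_assoc]

lemma integral_sub_eq_integral_ite_add_sum_integral_ite [IsFiniteMeasure P] {ι : Type*}
    [Fintype ι] {c : ι → ℕ} (hc : Function.Injective c) (hcpos : ∀ i, 0 < c i) {n m : ℕ}
    (hn : 0 < n) {W Ws : Ω → ℕ} (hW : Measurable W) (hWs : Measurable Ws) {B : ℕ}
    (hWB : ∀ ω, W ω ≤ B) (hWsB : ∀ ω, Ws ω ≤ B) (hWWs : ∀ ω, Ws ω = W ω ∨ ∃ i, Ws ω = W ω + c i)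
    (f : ℝ → ℝ) :
    ∫ ω, (f ((n * W ω + m : ℕ) : ℝ) - f ((n * Ws ω : ℕ) : ℝ)) ∂P =
      ∫ ω, (if ((n * W ω + m : ℕ) : ℤ) - (n * Ws ω : ℕ) = (m : ℤ) then
        f ((n * W ω + m : ℕ) : ℝ) - f ((n * Ws ω : ℕ) : ℝ) else 0) ∂P +
      ∑ i, ∫ ω, (if ((n * W ω + m : ℕ) : ℤ) - (n * Ws ω : ℕ) = (m : ℤ) - n * c i then
        f ((n * W ω + m : ℕ) : ℝ) - f ((n * Ws ω : ℕ) : ℝ) else 0) ∂P := by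
  have hnc : ∀ i, 0 < (n : ℤ) * c i := fun i => by have := hcpos i; positivity
  refine integral_eq_integral_ite_add_sum_integral_ite (by fun_prop)
    (fun i j h => hc (by simpa [hn.ne'] using h)) (fun i => by have := hnc i; omega)
    (fun ω => ?_) ((integrable_comp_of_le hW hWB fun k => f ((n * k + m : ℕ) : ℝ)).sub
      (integrable_comp_of_le hWs hWsB fun k => f ((n * k : ℕ) : ℝ)))
  rcases hWWs ω with h | ⟨i, h⟩
  · left; rw [h]; push_cast; ring
  · right; exact ⟨i, by rw [h]; push_cast; ring⟩

end Probability

section SizeBiasedIndex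

variable {Ω α β : Type*} [Fintype α] [Fintype β] [DecidableEq α] [DecidableEq β] {b : α → ℕ}
  {X : α × β → Ω → ℕ} {Idx : Ω → (a : α) × (β × Fin (b a))} {W Ws : Ω → ℕ}

lemma sizeBiased_le (hX01 : ∀ p ω, X p ω ≤ 1)
    (hWs : ∀ ω, Ws ω = ∑ q ∈ univ.erase ((Idx ω).1, (Idx ω).2.1), b q.1 * X q ω + b (Idx ω).1)
    (ω : Ω) : Ws ω ≤ ∑ p : α × β, b p.1 :=
  (hWs ω).trans_le (sum_erase_mul_add_le (fun q => b q.1) (fun q => hX01 q ω) _)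

lemma sizeBiased_eq_or (hX01 : ∀ p ω, X p ω ≤ 1) (hW : ∀ ω, W ω = ∑ p, b p.1 * X p ω)
    (hWs : ∀ ω, Ws ω = ∑ q ∈ univ.erase ((Idx ω).1, (Idx ω).2.1), b q.1 * X q ω + b (Idx ω).1)
    (ω : Ω) : Ws ω = W ω ∨ Ws ω = W ω + b (Idx ω).1 := by
  rw [hWs, hW, ← sum_erase_add _ _ (mem_univ ((Idx ω).1, (Idx ω).2.1))]
  rcases Nat.le_one_iff_eq_zero_or_eq_one.1 (hX01 ((Idx ω).1, (Idx ω).2.1) ω) with h | h <;>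
    simp [h]

variable [MeasurableSpace Ω] {P : Measure Ω} [MeasurableSpace β] [MeasurableSingletonClass β]

lemma measurable_sizeBiased (hXmeas : ∀ p, Measurable (X p)) (hIdxmeas : Measurable Idx)
    (hWs : ∀ ω, Ws ω = ∑ q ∈ univ.erase ((Idx ω).1, (Idx ω).2.1), b q.1 * X q ω + b (Idx ω).1) :
    Measurable Ws := by
  rw [funext hWs]
  exact (measurable_of_countable fun iv : ((a : α) × (β × Fin (b a))) × (α × β → ℕ) =>
    ∑ q ∈ univ.erase (iv.1.1, iv.1.2.1), b q.1 * iv.2 q + b iv.1.1).comp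
      (hIdxmeas.prodMk (measurable_pi_lambda _ hXmeas))

lemma integral_mul_comp_eq_mul_integral_comp_sizeBiased [IsProbabilityMeasure P] {π : α → ℝ}
    (hπ : ∀ a, 0 ≤ π a) {μ : ℝ} (hμ : 0 < μ) (hXmeas : ∀ p, Measurable (X p))
    (hX01 : ∀ p ω, X p ω ≤ 1) (hXdist : ∀ p, P {ω | X p ω = 1} = ENNReal.ofReal (π p.1))
    (hXindep : iIndepFun X P) (hIdxmeas : Measurable Idx)
    (hIdxdist : ∀ i, P {ω | Idx ω = i} = ENNReal.ofReal (π i.1 / μ))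
    (hIdxindep : IndepFun Idx (fun ω p => X p ω) P) (hW : ∀ ω, W ω = ∑ p, b p.1 * X p ω)
    (hWs : ∀ ω, Ws ω = ∑ q ∈ univ.erase ((Idx ω).1, (Idx ω).2.1), b q.1 * X q ω + b (Idx ω).1)
    (g : ℕ → ℝ) :
    ∫ ω, (W ω : ℝ) * g (W ω) ∂P = μ * ∫ ω, g (Ws ω) ∂P := by
  have hrest : ∀ p : α × β, Measurable fun ω => ∑ q ∈ univ.erase p, b q.1 * X q ω + b p.1 :=
    fun p => (Finset.measurable_sum _ fun q _ => (hXmeas q).const_mul _).add_const _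
  have hrest_le : ∀ (p : α × β) ω, ∑ q ∈ univ.erase p, b q.1 * X q ω + b p.1 ≤ ∑ q : α × β, b q.1 :=
    fun p ω => sum_erase_mul_add_le (fun q => b q.1) (fun q => hX01 q ω) p
  have hindex := integral_comp_index_eq_sum hIdxmeas hIdxindep
    (F := fun i v => g (∑ q ∈ univ.erase (i.1, i.2.1), b q.1 * v q + b i.1))
    (fun i => measurable_of_countable _)
    (fun i => integrable_comp_of_le (hrest (i.1, i.2.1)) (hrest_le _) g)
  have hsigma := sum_sigma_prod_fin b fun p : α × β =>
    π p.1 / μ * ∫ ω, g (∑ q ∈ univ.erase p, b q.1 * X q ω + b p.1) ∂P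
  simp only at hindex hsigma
  simp only [hW, hWs]
  rw [integral_sum_mul_comp_sum_eq hXmeas hX01 hXindep (fun p => b p.1) g, hindex]
  simp only [measureReal_def, hXdist, hIdxdist, ENNReal.toReal_ofReal (hπ _),
    ENNReal.toReal_ofReal (div_nonneg (hπ _) hμ.le)]
  rw [hsigma, mul_sum]
  refine sum_congr rfl fun p _ => ?_
  rw [nsmul_eq_mul]
  field_simp

end SizeBiasedIndex

theorem stein_expectation_decomposition_general
    {Ω : Type} [MeasurableSpace Ω] (P : MeasureTheory.Measure Ω)
    [MeasureTheory.IsProbabilityMeasure P]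
    -- `R ≥ 1` classes with distinct positive integer weights `0 < b 0 < b 1 < ⋯`
    (R : ℕ) (hR : 1 ≤ R)
    (b : Fin R → ℕ) (hbpos : ∀ r, 0 < b r) (hbmono : StrictMono b)
    -- positive Poisson means `ν r`
    (ν : Fin R → ℝ) (hν : ∀ r, 0 < ν r)
    -- `μ = Σ b_r ν_r`, `σ² = Σ b_r² ν_r`
    (μ : ℝ) (hμ : μ = ∑ r, (b r : ℝ) * ν r)
    (σ2 : ℝ)
    -- `k = μ/σ² = n/m` with `n, m` relatively prime positive integers; `λ = k·μ`
    (n m : ℕ) (hn : 0 < n) (hm : 0 < m)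
    (hk : μ / σ2 = (n : ℝ) / m)
    (lam : ℝ) (hlam : lam = μ / σ2 * μ)
    -- the mutually independent Bernoulli(ν_r/M*) variables `X r j`, for `r < R`, `j < M*`
    (M : ℕ)
    (X : Fin R → Fin M → Ω → ℕ)
    (hXmeas : ∀ r j, Measurable (X r j))
    (hX01 : ∀ r j ω, X r j ω ≤ 1)
    (hXdist : ∀ r j, P {ω | X r j ω = 1} = ENNReal.ofReal (ν r / M))
    (hXindep : ProbabilityTheory.iIndepFun
      (fun p : Fin R × Fin M => X p.1 p.2) P)
    -- `W = Σ_{i=1}^{N*} X_i`: each `X r j` appears with `b r` identical copies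
    (W : Ω → ℕ) (hW : ∀ ω, W ω = ∑ r, ∑ j, b r * X r j ω)
    -- the random index `I`, uniform over the `N*` copies weighted by `p_i/μ`:
    -- an index is a triple `⟨r, j, c⟩` with `c < b r` ranging over the `b r` copies of `X r j`,
    -- and `P(I = i) = p_i/μ = (ν r / M*)/μ`; `I` is independent of the family `X`
    (Idx : Ω → (r : Fin R) × (Fin M × Fin (b r)))
    (hIdxmeas : Measurable Idx)
    (hIdxdist : ∀ i : (r : Fin R) × (Fin M × Fin (b r)),
      P {ω | Idx ω = i} = ENNReal.ofReal (ν i.1 / M / μ))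
    (hIdxindep : ProbabilityTheory.IndepFun Idx
      (fun ω (p : Fin R × Fin M) => X p.1 p.2 ω) P)
    -- the size-biased variable `W^s = Σ_{i ∉ S(I)} X_i + b_I`: all copies of `X_{I}` are
    -- removed from the sum (the copies of `X r j` contribute `b r · X r j`) and `b_I` is added
    (Ws : Ω → ℕ)
    (hWs : ∀ ω, Ws ω =
      (∑ r, ∑ j, if r = (Idx ω).1 ∧ j = (Idx ω).2.1 then 0 else b r * X r j ω) +
        b (Idx ω).1)
    (y : ℕ) :
    (P {ω | m * y ≤ n * W ω}).toReal - poissonTail lam y =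
      lam * m * ∫ ω, (fh lam m y ((n * W ω + m : ℕ) : ℝ) -
        fh lam m y ((n * Ws ω : ℕ) : ℝ)) ∂P ∧
    lam * m * ∫ ω, (fh lam m y ((n * W ω + m : ℕ) : ℝ) -
        fh lam m y ((n * Ws ω : ℕ) : ℝ)) ∂P =
      (lam * m * ∫ ω, (if ((n * W ω + m : ℕ) : ℤ) - (n * Ws ω : ℕ) = (m : ℤ) then
          fh lam m y ((n * W ω + m : ℕ) : ℝ) - fh lam m y ((n * Ws ω : ℕ) : ℝ) else 0) ∂P) +
      ∑ r : Fin R,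
        lam * m * ∫ ω, (if ((n * W ω + m : ℕ) : ℤ) - (n * Ws ω : ℕ) =
            (m : ℤ) - n * b r then
          fh lam m y ((n * W ω + m : ℕ) : ℝ) - fh lam m y ((n * Ws ω : ℕ) : ℝ) else 0) ∂P := by
  have hW' : ∀ ω, W ω = ∑ p : Fin R × Fin M, b p.1 * X p.1 p.2 ω := fun ω =>
    (hW ω).trans (Fintype.sum_prod_type' fun r j => b r * X r j ω).symm
  have hWs' : ∀ ω, Ws ω = ∑ q ∈ univ.erase ((Idx ω).1, (Idx ω).2.1), b q.1 * X q.1 q.2 ω +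
      b (Idx ω).1 := fun ω => by
    rw [hWs, sum_sum_ite_and_eq_sum_erase]
  have hX01' : ∀ p : Fin R × Fin M, ∀ ω, X p.1 p.2 ω ≤ 1 := fun p => hX01 p.1 p.2
  have hWmeas : Measurable W := by
    rw [funext hW']
    fun_prop
  have hWsmeas := measurable_sizeBiased (fun p => hXmeas p.1 p.2) hIdxmeas hWs'
  have hWle : ∀ ω, W ω ≤ ∑ p : Fin R × Fin M, b p.1 := fun ω =>
    (hW' ω).trans_le (sum_mul_le_sum _ (hX01' · ω))
  have hμpos : 0 < μ := hμ ▸ sum_pos (fun r _ => mul_pos (Nat.cast_pos.2 (hbpos r)) (hν r))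
    ⟨⟨0, hR⟩, mem_univ _⟩
  have hlm : lam * m = n * μ := by
    rw [hlam, hk]
    field_simp
  refine ⟨?_, ?_⟩
  · rw [← measureReal_def]
    exact measureReal_sub_poissonTail_eq_integral_sizeBiased hm hlm hWmeas hWsmeas hWle
      (sizeBiased_le hX01' hWs') fun g => integral_mul_comp_eq_mul_integral_comp_sizeBiased
        (fun r => div_nonneg (hν r).le M.cast_nonneg) hμpos (fun p => hXmeas p.1 p.2) hX01'
        (fun p => hXdist p.1 p.2) hXindep hIdxmeas hIdxdist hIdxindep hW' hWs' g
  · rw [integral_sub_eq_integral_ite_add_sum_integral_ite hbmono.injective hbpos hn hWmeas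
      hWsmeas hWle (sizeBiased_le hX01' hWs')
      (fun ω => (sizeBiased_eq_or hX01' hW' hWs' ω).imp_right fun h => ⟨_, h⟩), mul_add, mul_sum]

/-- **Decomposition of the Stein expectation.**
With `h(w) = 1{w ≥ my}` for a positive integer `y`, `f_h` the Stein solution for `h`,
`W^s` the size-biased version of the Bernoulli sum `W`, and `Δ = nW + m − nW^s`, one has
`E[h(nW)] − E[h(Â_λ)] = λ·m·E[f_h(nW + m) − f_h(nW^s)] = H₀ + H₁ + ⋯ + H_R`, where
`H₀ = λm·E[(f_h(nW + m) − f_h(nW^s))·1{Δ = m}]` and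
`H_r = λm·E[(f_h(nW + m) − f_h(nW^s))·1{Δ = m − n·b_r}]` for `r = 1, …, R`.
Here `E[h(nW)] = P(nW ≥ my)` and `E[h(Â_λ)] = P(Â_λ ≥ my) = poissonTail λ y`. -/
theorem stein_expectation_decomposition
    {Ω : Type} [MeasurableSpace Ω] (P : MeasureTheory.Measure Ω)
    [MeasureTheory.IsProbabilityMeasure P]
    -- `R ≥ 1` classes with distinct positive integer weights `0 < b 0 < b 1 < ⋯`
    (R : ℕ) (hR : 1 ≤ R)
    (b : Fin R → ℕ) (hbpos : ∀ r, 0 < b r) (hbmono : StrictMono b)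
    -- positive Poisson means `ν r`
    (ν : Fin R → ℝ) (hν : ∀ r, 0 < ν r)
    -- `μ = Σ b_r ν_r`, `σ² = Σ b_r² ν_r`
    (μ : ℝ) (hμ : μ = ∑ r, (b r : ℝ) * ν r)
    (σ2 : ℝ) (hσ2 : σ2 = ∑ r, (b r : ℝ) ^ 2 * ν r)
    -- `k = μ/σ² = n/m` with `n, m` relatively prime positive integers; `λ = k·μ`
    (n m : ℕ) (hn : 0 < n) (hm : 0 < m) (hcop : Nat.Coprime n m)
    (hk : μ / σ2 = (n : ℝ) / m)
    (lam : ℝ) (hlam : lam = μ / σ2 * μ)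
    -- the mutually independent Bernoulli(ν_r/M*) variables `X r j`, for `r < R`, `j < M*`
    (M : ℕ) (hM : 0 < M)
    (X : Fin R → Fin M → Ω → ℕ)
    (hXmeas : ∀ r j, Measurable (X r j))
    (hX01 : ∀ r j ω, X r j ω ≤ 1)
    (hXdist : ∀ r j, P {ω | X r j ω = 1} = ENNReal.ofReal (ν r / M))
    (hXindep : ProbabilityTheory.iIndepFun
      (fun p : Fin R × Fin M => X p.1 p.2) P)
    -- `W = Σ_{i=1}^{N*} X_i`: each `X r j` appears with `b r` identical copies
    (W : Ω → ℕ) (hW : ∀ ω, W ω = ∑ r, ∑ j, b r * X r j ω)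
    -- the random index `I`, uniform over the `N*` copies weighted by `p_i/μ`:
    -- an index is a triple `⟨r, j, c⟩` with `c < b r` ranging over the `b r` copies of `X r j`,
    -- and `P(I = i) = p_i/μ = (ν r / M*)/μ`; `I` is independent of the family `X`
    (Idx : Ω → (r : Fin R) × (Fin M × Fin (b r)))
    (hIdxmeas : Measurable Idx)
    (hIdxdist : ∀ i : (r : Fin R) × (Fin M × Fin (b r)),
      P {ω | Idx ω = i} = ENNReal.ofReal (ν i.1 / M / μ))
    (hIdxindep : ProbabilityTheory.IndepFun Idx
      (fun ω (p : Fin R × Fin M) => X p.1 p.2 ω) P)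
    -- the size-biased variable `W^s = Σ_{i ∉ S(I)} X_i + b_I`: all copies of `X_{I}` are
    -- removed from the sum (the copies of `X r j` contribute `b r · X r j`) and `b_I` is added
    (Ws : Ω → ℕ)
    (hWs : ∀ ω, Ws ω =
      (∑ r, ∑ j, if r = (Idx ω).1 ∧ j = (Idx ω).2.1 then 0 else b r * X r j ω) +
        b (Idx ω).1)
    (y : ℕ) (hy : 0 < y) :
    (P {ω | m * y ≤ n * W ω}).toReal - poissonTail lam y =
      lam * m * ∫ ω, (fh lam m y ((n * W ω + m : ℕ) : ℝ) -
        fh lam m y ((n * Ws ω : ℕ) : ℝ)) ∂P ∧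
    lam * m * ∫ ω, (fh lam m y ((n * W ω + m : ℕ) : ℝ) -
        fh lam m y ((n * Ws ω : ℕ) : ℝ)) ∂P =
      (lam * m * ∫ ω, (if ((n * W ω + m : ℕ) : ℤ) - (n * Ws ω : ℕ) = (m : ℤ) then
          fh lam m y ((n * W ω + m : ℕ) : ℝ) - fh lam m y ((n * Ws ω : ℕ) : ℝ) else 0) ∂P) +
      ∑ r : Fin R,
        lam * m * ∫ ω, (if ((n * W ω + m : ℕ) : ℤ) - (n * Ws ω : ℕ) =
            (m : ℤ) - n * b r then
          fh lam m y ((n * W ω + m : ℕ) : ℝ) - fh lam m y ((n * Ws ω : ℕ) : ℝ) else 0) ∂P :=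
  stein_expectation_decomposition_general P R hR b hbpos hbmono ν hν μ hμ σ2 n m hn hm hk lam hlam M
    X hXmeas hX01 hXdist hXindep W hW Idx hIdxmeas hIdxdist hIdxindep Ws hWs y
end

section
/- For every r ∈ {1, …, R} and every integer w with P(W = w) > 0, the conditional probability satisfies P(Δ = m − n·b_r | W = w) ≤ b_r·ν_r/μ. -/
/-!
Since `W^s - W = b_I (1 - X_I)` takes only the values `0` and `b_I`, while `b_r > 0`, the
event `Δ = m - n b_r`, i.e. `W^s - W = b_r`, forces `b_I = b_r`; the `b`'s being distinct, the
random index `I` then lies in class `r`. That event depends on `I` alone, so it is independent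
of `{W = w}`, and its probability is `M* b_r (ν_r / M*) / μ = b_r ν_r / μ`.
-/

open MeasureTheory ProbabilityTheory

instance Sigma.instDiscreteMeasurableSpace {α : Type*} {β : α → Type*}
    [∀ a, MeasurableSpace (β a)] [∀ a, DiscreteMeasurableSpace (β a)] :
    DiscreteMeasurableSpace (Sigma β) where
  forall_measurableSet s := by
    rw [Sigma.instMeasurableSpace, MeasurableSpace.measurableSet_iInf]
    exact fun a => MeasurableSet.of_discrete (s := Sigma.mk a ⁻¹' s)

lemma measure_preimage_fst_preimage_singleton {Ω α : Type*} {β : α → Type*} [MeasurableSpace Ω]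
    {P : Measure Ω} [∀ a, MeasurableSpace (β a)] [∀ a, DiscreteMeasurableSpace (β a)]
    [∀ a, Fintype (β a)] {f : Ω → Sigma β} (hf : Measurable f) (a : α) :
    P (f ⁻¹' (Sigma.fst ⁻¹' {a})) = ∑ p, P (f ⁻¹' {⟨a, p⟩}) := by
  have hfiber : Sigma.fst ⁻¹' {a} =
      ((Finset.univ.map (Function.Embedding.sigmaMk a) : Finset (Sigma β)) : Set (Sigma β)) := by
    simp [← Set.range_sigmaMk]
  rw [hfiber, ← sum_measure_preimage_singleton _ fun _ _ => hf .of_discrete, Finset.sum_map]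
  rfl

lemma ProbabilityTheory.IndepFun.cond_le_of_subset_preimage {Ω α β : Type*} [MeasurableSpace Ω]
    [MeasurableSpace α] [MeasurableSpace β] {P : Measure Ω} [IsFiniteMeasure P] {f : Ω → α}
    {g : Ω → β} (hfg : IndepFun f g P) (hf : Measurable f) {s : Set α} {t : Set β} {A : Set Ω}
    (hs : MeasurableSet s) (ht : MeasurableSet t) (hA : A ⊆ f ⁻¹' s) (ht0 : P (g ⁻¹' t) ≠ 0) :
    P[A | g ⁻¹' t] ≤ P (f ⁻¹' s) :=
  calc P[A | g ⁻¹' t] ≤ P[f ⁻¹' s | g ⁻¹' t] := measure_mono hA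
    _ = P (f ⁻¹' s) := by
      rw [cond_apply' (hf hs), Set.inter_comm, hfg.measure_inter_preimage_eq_mul _ _ hs ht,
        mul_left_comm, ENNReal.inv_mul_cancel ht0 (measure_ne_top _ _), mul_one]

lemma Fintype.sum_eq_sum_ite_add {ι M : Type*} [Fintype ι] [DecidableEq ι] [AddCommMonoid M]
    (f : ι → M) (i : ι) : ∑ j, f j = (∑ j, if j = i then 0 else f j) + f i := by
  rw [Finset.sum_ite, Finset.sum_const_zero, zero_add, Finset.filter_ne',
    ← Finset.sum_erase_add _ _ (Finset.mem_univ i)]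

lemma Fintype.sum_sum_eq_sum_sum_ite_add {ι κ M : Type*} [Fintype ι] [Fintype κ] [DecidableEq ι]
    [DecidableEq κ] [AddCommMonoid M] (f : ι → κ → M) (i : ι) (k : κ) :
    ∑ a, ∑ c, f a c = (∑ a, ∑ c, if a = i ∧ c = k then 0 else f a c) + f i k := by
  simp only [← Fintype.sum_prod_type']
  rw [Fintype.sum_eq_sum_ite_add _ (i, k)]
  simp only [Prod.ext_iff]

lemma sizeBias_weight_eq_of_delta_eq {n m W Ws c d x : ℕ} (hn : 0 < n) (hd : 0 < d) (hx : x ≤ 1)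
    (hWs : Ws + c * x = W + c)
    (hΔ : ((n * W + m : ℕ) : ℤ) - (n * Ws : ℕ) = m - n * d) : c = d := by
  have hshift : Ws = W + d := by
    have : (n : ℤ) * Ws = n * (W + d) := by push_cast at hΔ; linarith
    exact_mod_cast mul_left_cancel₀ (by positivity) this
  interval_cases x <;> omega

theorem conditional_delta_bound_general
    {Ω : Type} [MeasurableSpace Ω] (P : MeasureTheory.Measure Ω)
    [MeasureTheory.IsProbabilityMeasure P]
    -- `R ≥ 1` classes with distinct positive integer weights `0 < b 0 < b 1 < ⋯`
    (R : ℕ)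
    (b : Fin R → ℕ) (hbpos : ∀ r, 0 < b r) (hbmono : StrictMono b)
    -- positive Poisson means `ν r`
    (ν : Fin R → ℝ) (hν : ∀ r, 0 < ν r)
    -- `μ = Σ b_r ν_r`, `σ² = Σ b_r² ν_r`
    (μ : ℝ) (hμ : μ = ∑ r, (b r : ℝ) * ν r)
    -- `k = μ/σ² = n/m` with `n, m` relatively prime positive integers; `λ = k·μ`
    (n m : ℕ) (hn : 0 < n)
    -- the mutually independent Bernoulli(ν_r/M*) variables `X r j`, for `r < R`, `j < M*`
    (M : ℕ) (hM : 0 < M)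
    (X : Fin R → Fin M → Ω → ℕ)
    (hX01 : ∀ r j ω, X r j ω ≤ 1)
    -- `W = Σ_{i=1}^{N*} X_i`: each `X r j` appears with `b r` identical copies
    (W : Ω → ℕ) (hW : ∀ ω, W ω = ∑ r, ∑ j, b r * X r j ω)
    -- the random index `I`, uniform over the `N*` copies weighted by `p_i/μ`:
    -- an index is a triple `⟨r, j, c⟩` with `c < b r` ranging over the `b r` copies of `X r j`,
    -- and `P(I = i) = p_i/μ = (ν r / M*)/μ`; `I` is independent of the family `X`
    (Idx : Ω → (r : Fin R) × (Fin M × Fin (b r)))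
    (hIdxmeas : Measurable Idx)
    (hIdxdist : ∀ i : (r : Fin R) × (Fin M × Fin (b r)),
      P {ω | Idx ω = i} = ENNReal.ofReal (ν i.1 / M / μ))
    (hIdxindep : ProbabilityTheory.IndepFun Idx
      (fun ω (p : Fin R × Fin M) => X p.1 p.2 ω) P)
    -- the size-biased variable `W^s = Σ_{i ∉ S(I)} X_i + b_I`: all copies of `X_{I}` are
    -- removed from the sum (the copies of `X r j` contribute `b r · X r j`) and `b_I` is added
    (Ws : Ω → ℕ)
    (hWs : ∀ ω, Ws ω =
      (∑ r, ∑ j, if r = (Idx ω).1 ∧ j = (Idx ω).2.1 then 0 else b r * X r j ω) +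
        b (Idx ω).1)
    :
    ∀ (r : Fin R) (w : ℕ), 0 < P {ω | W ω = w} →
      (ProbabilityTheory.cond P {ω | W ω = w}
          {ω | ((n * W ω + m : ℕ) : ℤ) - (n * Ws ω : ℕ) = (m : ℤ) - n * b r}).toReal ≤
        (b r : ℝ) * ν r / μ := by
  intro r w hw
  have hμ0 : 0 ≤ μ := hμ ▸ Finset.sum_nonneg fun i _ => mul_nonneg (Nat.cast_nonneg _) (hν i).le
  have hsub : {ω | ((n * W ω + m : ℕ) : ℤ) - (n * Ws ω : ℕ) = (m : ℤ) - n * b r} ⊆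
      Idx ⁻¹' (Sigma.fst ⁻¹' {r}) := by
    intro ω hω
    have hshift : Ws ω + b (Idx ω).1 * X (Idx ω).1 (Idx ω).2.1 ω = W ω + b (Idx ω).1 := by
      rw [hWs, hW,
        Fintype.sum_sum_eq_sum_sum_ite_add (fun r j => b r * X r j ω) (Idx ω).1 (Idx ω).2.1]
      ring
    exact hbmono.injective (sizeBias_weight_eq_of_delta_eq hn (hbpos r) (hX01 _ _ ω) hshift hω)
  have hS : P (Idx ⁻¹' (Sigma.fst ⁻¹' {r})) = ENNReal.ofReal (b r * ν r / μ) :=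
    calc P (Idx ⁻¹' (Sigma.fst ⁻¹' {r}))
        = ∑ _p : Fin M × Fin (b r), ENNReal.ofReal (ν r / M / μ) := by
          rw [measure_preimage_fst_preimage_singleton hIdxmeas]
          exact Finset.sum_congr rfl fun p _ => hIdxdist ⟨r, p⟩
      _ = ENNReal.ofReal (b r * ν r / μ) := by
          rw [Finset.sum_const, Finset.card_univ, Fintype.card_prod, Fintype.card_fin,
            Fintype.card_fin, nsmul_eq_mul, ← ENNReal.ofReal_natCast,
            ← ENNReal.ofReal_mul (by positivity)]
          congr 1
          field_simp
          push_cast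
          ring
  have hB : {ω | W ω = w} = (fun ω (p : Fin R × Fin M) => X p.1 p.2 ω) ⁻¹'
      {f | ∑ r, ∑ j, b r * f (r, j) = w} := by
    ext ω
    simp [hW]
  rw [hB] at hw ⊢
  refine ENNReal.toReal_le_of_le_ofReal
    (div_nonneg (mul_nonneg (Nat.cast_nonneg _) (hν r).le) hμ0) ?_
  rw [← hS]
  exact hIdxindep.cond_le_of_subset_preimage hIdxmeas .of_discrete .of_discrete hsub hw.ne'

/-- **Conditional probability bound for `Δ`.**
With `W` the locally dependent Bernoulli sum, `W^s` its size-biased version, and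
`Δ = nW + m − nW^s`, for every `r ∈ {1, …, R}` and every integer `w` with `P(W = w) > 0`,
`P(Δ = m − n·b_r | W = w) ≤ b_r·ν_r/μ`. -/
theorem conditional_delta_bound
    {Ω : Type} [MeasurableSpace Ω] (P : MeasureTheory.Measure Ω)
    [MeasureTheory.IsProbabilityMeasure P]
    -- `R ≥ 1` classes with distinct positive integer weights `0 < b 0 < b 1 < ⋯`
    (R : ℕ) (hR : 1 ≤ R)
    (b : Fin R → ℕ) (hbpos : ∀ r, 0 < b r) (hbmono : StrictMono b)
    -- positive Poisson means `ν r`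
    (ν : Fin R → ℝ) (hν : ∀ r, 0 < ν r)
    -- `μ = Σ b_r ν_r`, `σ² = Σ b_r² ν_r`
    (μ : ℝ) (hμ : μ = ∑ r, (b r : ℝ) * ν r)
    (σ2 : ℝ) (hσ2 : σ2 = ∑ r, (b r : ℝ) ^ 2 * ν r)
    -- `k = μ/σ² = n/m` with `n, m` relatively prime positive integers; `λ = k·μ`
    (n m : ℕ) (hn : 0 < n) (hm : 0 < m) (hcop : Nat.Coprime n m)
    (hk : μ / σ2 = (n : ℝ) / m)
    (lam : ℝ) (hlam : lam = μ / σ2 * μ)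
    -- the mutually independent Bernoulli(ν_r/M*) variables `X r j`, for `r < R`, `j < M*`
    (M : ℕ) (hM : 0 < M)
    (X : Fin R → Fin M → Ω → ℕ)
    (hXmeas : ∀ r j, Measurable (X r j))
    (hX01 : ∀ r j ω, X r j ω ≤ 1)
    (hXdist : ∀ r j, P {ω | X r j ω = 1} = ENNReal.ofReal (ν r / M))
    (hXindep : ProbabilityTheory.iIndepFun
      (fun p : Fin R × Fin M => X p.1 p.2) P)
    -- `W = Σ_{i=1}^{N*} X_i`: each `X r j` appears with `b r` identical copies
    (W : Ω → ℕ) (hW : ∀ ω, W ω = ∑ r, ∑ j, b r * X r j ω)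
    -- the random index `I`, uniform over the `N*` copies weighted by `p_i/μ`:
    -- an index is a triple `⟨r, j, c⟩` with `c < b r` ranging over the `b r` copies of `X r j`,
    -- and `P(I = i) = p_i/μ = (ν r / M*)/μ`; `I` is independent of the family `X`
    (Idx : Ω → (r : Fin R) × (Fin M × Fin (b r)))
    (hIdxmeas : Measurable Idx)
    (hIdxdist : ∀ i : (r : Fin R) × (Fin M × Fin (b r)),
      P {ω | Idx ω = i} = ENNReal.ofReal (ν i.1 / M / μ))
    (hIdxindep : ProbabilityTheory.IndepFun Idx
      (fun ω (p : Fin R × Fin M) => X p.1 p.2 ω) P)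
    -- the size-biased variable `W^s = Σ_{i ∉ S(I)} X_i + b_I`: all copies of `X_{I}` are
    -- removed from the sum (the copies of `X r j` contribute `b r · X r j`) and `b_I` is added
    (Ws : Ω → ℕ)
    (hWs : ∀ ω, Ws ω =
      (∑ r, ∑ j, if r = (Idx ω).1 ∧ j = (Idx ω).2.1 then 0 else b r * X r j ω) +
        b (Idx ω).1)
    :
    ∀ (r : Fin R) (w : ℕ), 0 < P {ω | W ω = w} →
      (ProbabilityTheory.cond P {ω | W ω = w}
          {ω | ((n * W ω + m : ℕ) : ℤ) - (n * Ws ω : ℕ) = (m : ℤ) - n * b r}).toReal ≤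
        (b r : ℝ) * ν r / μ :=
  conditional_delta_bound_general P R b hbpos hbmono ν hν μ hμ n m hn M hM X hX01 W hW Idx hIdxmeas
    hIdxdist hIdxindep Ws hWs
end

section
/- There exists a constant C > 0, independent of w, y and λ, such that for every real w ≥ my and every l ∈ {1, 2, …, m}, 0 < f_h(w + l) − f_h(w) ≤ C/w. -/
/-!
For `w ≥ m y` every indicator in `fh` equals `1`, so with `x = w / m` one gets
`f_h(w) = -P(A_λ < y) · T(x) / m`, where `T = steinSeries λ`,
`T(x) = ∑ⱼ λ^j / (x (x + 1) ⋯ (x + j))`, is strictly decreasing and satisfies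
`T(x) = (1 + λ T(x + 1)) / x`. This gives positivity of the increment, and
`T(x) - T(x + l/m) ≤ T(x) - T(x + 1) = (1 + (λ - x) T(x + 1)) / x` reduces the upper bound (with
`C = 2`) to `P(A_λ < y) (λ - x) T(x + 1) ≤ 1`. For `λ > x ≥ y` the latter follows from the
telescoping bound `(λ - y) ∑_{k<y} λ^k/k! ≤ y λ^y/y!` and the termwise comparison
`y (λ^y/y!) T(y + 1) ≤ ∑_{n ≥ y} λ^n/n! ≤ e^λ`.
-/

open Finset Nat

lemma Real.hasSum_pow_div_factorial (x : ℝ) : HasSum (fun n : ℕ => x ^ n / n !) (Real.exp x) :=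
  Real.exp_eq_exp_ℝ ▸ NormedSpace.expSeries_div_hasSum_exp x

section PoissonTail

variable {lam : ℝ}

lemma one_sub_poissonTail (lam : ℝ) (y : ℕ) :
    1 - poissonTail lam y = Real.exp (-lam) * ∑ k ∈ range y, lam ^ k / k ! := by
  set p : ℕ → ℝ := fun j => Real.exp (-lam) * lam ^ j / (j ! : ℝ)
  have hp : HasSum p 1 := by
    simpa only [p, mul_div_assoc, ← Real.exp_add, neg_add_cancel, Real.exp_zero] using
      (Real.hasSum_pow_div_factorial lam).mul_left (Real.exp (-lam))
  have htail : HasSum (fun j => if y ≤ j then p j else 0) (1 - ∑ k ∈ range y, p k) := by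
    rw [← hasSum_nat_add_iff' y, sum_eq_zero fun k hk => if_neg (by simpa using hk), sub_zero]
    simpa using (hasSum_nat_add_iff' y).2 hp
  rw [poissonTail, htail.tsum_eq, mul_sum]
  simp only [p, sub_sub_cancel, mul_div_assoc]

lemma poissonTail_nonneg (hlam : 0 ≤ lam) (y : ℕ) : 0 ≤ poissonTail lam y :=
  tsum_nonneg fun j => by split_ifs <;> positivity

lemma one_sub_poissonTail_pos (hlam : 0 ≤ lam) {y : ℕ} (hy : 0 < y) :
    0 < 1 - poissonTail lam y := by
  have h0 := single_le_sum (f := fun k => lam ^ k / (k ! : ℝ)) (fun k _ => by positivity)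
    (mem_range.2 hy)
  simp only [pow_zero, factorial_zero, cast_one, div_one] at h0
  rw [one_sub_poissonTail]
  exact mul_pos (Real.exp_pos _) (zero_lt_one.trans_le h0)

-- Telescopes, since `λ · λ^k/k! = (k + 1) · λ^(k+1)/(k+1)!`.
lemma sum_range_sub_mul_pow_div_factorial (lam : ℝ) (y : ℕ) :
    ∑ k ∈ range y, (lam - k) * (lam ^ k / k !) = y * (lam ^ y / y !) := by
  induction y with
  | zero => simp
  | succ n ih =>
    rw [sum_range_succ, ih, factorial_succ, pow_succ]
    push_cast
    field_simp
    ring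

lemma sub_mul_sum_range_pow_div_factorial_le (hlam : 0 ≤ lam) (y : ℕ) :
    (lam - y) * ∑ k ∈ range y, lam ^ k / k ! ≤ y * (lam ^ y / y !) := by
  rw [← sum_range_sub_mul_pow_div_factorial, mul_sum]
  gcongr with k hk
  exact_mod_cast (mem_range.1 hk).le

end PoissonTail

noncomputable def steinSeries (lam x : ℝ) : ℝ :=
  ∑' j : ℕ, lam ^ j / ∏ ℓ ∈ range (j + 1), (x + ℓ)

section SteinSeries

variable {lam x : ℝ}

lemma factorial_mul_le_prod_range_add (hx : 0 < x) (j : ℕ) :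
    j ! * x ≤ ∏ ℓ ∈ range (j + 1), (x + ℓ) := by
  rw [prod_range_succ', ← prod_range_add_one_eq_factorial]
  push_cast
  rw [add_zero]
  gcongr (∏ i ∈ _, ?_) * _ with ℓ
  linarith

lemma summable_steinSeries (lam : ℝ) (hx : 0 < x) :
    Summable fun j : ℕ => lam ^ j / ∏ ℓ ∈ range (j + 1), (x + ℓ) := by
  refine ((Real.summable_pow_div_factorial |lam|).mul_left x⁻¹).of_norm_bounded fun j => ?_
  have hprod : 0 < ∏ ℓ ∈ range (j + 1), (x + ℓ) := prod_pos fun ℓ _ => by positivity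
  rw [norm_div, norm_pow, Real.norm_eq_abs, Real.norm_eq_abs, abs_of_pos hprod, inv_mul_eq_div,
    div_div]
  gcongr
  exact factorial_mul_le_prod_range_add hx j

lemma steinSeries_strictAntiOn (hlam : 0 ≤ lam) :
    StrictAntiOn (steinSeries lam) (Set.Ioi 0) := by
  intro x (hx : 0 < x) x' (hx' : 0 < x') hxx'
  refine Summable.tsum_lt_tsum_of_nonneg (i := 0) (fun j => ?_) (fun j => ?_) ?_
    (summable_steinSeries lam hx)
  · have := prod_pos fun ℓ (_ : ℓ ∈ range (j + 1)) => (by positivity : 0 < x' + ℓ)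
    positivity
  · gcongr
  · simpa using inv_strictAnti₀ hx hxx'

lemma steinSeries_nonneg (hlam : 0 ≤ lam) (hx : 0 < x) : 0 ≤ steinSeries lam x :=
  tsum_nonneg fun j => by
    have := prod_pos fun ℓ (_ : ℓ ∈ range (j + 1)) => (by positivity : 0 < x + ℓ)
    positivity

lemma steinSeries_eq_one_div_add (lam : ℝ) (hx : 0 < x) :
    steinSeries lam x = 1 / x + lam / x * steinSeries lam (x + 1) := by
  rw [steinSeries, (summable_steinSeries lam hx).tsum_eq_zero_add, steinSeries, ← tsum_mul_left]
  congr 1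
  · simp
  · refine tsum_congr fun j => ?_
    rw [prod_range_succ' _ (j + 1), pow_succ]
    push_cast
    simp_rw [add_zero, add_assoc, add_comm (1 : ℝ)]
    field_simp

lemma steinSeries_sub_le {t : ℝ} (hlam : 0 ≤ lam) (hx : 0 < x) (ht : 0 ≤ t)
    (ht1 : t ≤ 1) : steinSeries lam x - steinSeries lam (x + t) ≤
      (1 + (lam - x) * steinSeries lam (x + 1)) / x := by
  have hanti := (steinSeries_strictAntiOn hlam).antitoneOn
    (show 0 < x + t by positivity) (show 0 < x + 1 by positivity) (by linarith)
  calc _ ≤ steinSeries lam x - steinSeries lam (x + 1) := by linarith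
    _ = _ := by
        rw [steinSeries_eq_one_div_add lam hx]
        field_simp
        ring

lemma steinSeries_natCast_add_one_term (lam : ℝ) (y j : ℕ) :
    lam ^ j / ∏ ℓ ∈ range (j + 1), ((y + 1 : ℝ) + ℓ) = lam ^ j * y ! / (y + j + 1)! := by
  rw [add_assoc y, ← factorial_mul_ascFactorial, ascFactorial_eq_prod_range]
  push_cast
  field_simp

lemma natCast_mul_pow_div_factorial_mul_steinSeries_le (hlam : 0 ≤ lam) (y : ℕ) :
    y * (lam ^ y / y !) * steinSeries lam (y + 1) ≤ Real.exp lam := by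
  have hshift := (hasSum_nat_add_iff' y).2 (Real.hasSum_pow_div_factorial lam)
  calc _ ≤ ∑' j : ℕ, lam ^ (j + y) / (j + y)! := by
        rw [steinSeries, ← tsum_mul_left]
        refine Summable.tsum_le_tsum (fun j => ?_)
          ((summable_steinSeries lam (by positivity)).mul_left _) hshift.summable
        calc _ = lam ^ (j + y) / (j + y)! * (y / (j + y + 1)) := by
              rw [steinSeries_natCast_add_one_term, show y + j + 1 = (j + y) + 1 by ring,
                factorial_succ, pow_add]
              push_cast
              field_simp
          _ ≤ lam ^ (j + y) / (j + y)! :=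
              mul_le_of_le_one_right (by positivity)
                (div_le_one_of_le₀ (by linarith) (by positivity))
    _ ≤ Real.exp lam := by
        rw [hshift.tsum_eq, sub_le_self_iff]
        positivity

end SteinSeries

lemma one_sub_poissonTail_mul_sub_mul_steinSeries_le {lam x : ℝ} (hlam : 0 ≤ lam) {y : ℕ}
    (hyx : (y : ℝ) ≤ x) :
    (1 - poissonTail lam y) * ((lam - x) * steinSeries lam (x + 1)) ≤ 1 := by
  have hq : 0 ≤ 1 - poissonTail lam y := by rw [one_sub_poissonTail]; positivity
  have hx : (0 : ℝ) < x + 1 := by linarith [(Nat.cast_nonneg y : (0 : ℝ) ≤ y)]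
  have hS := steinSeries_nonneg hlam hx
  rcases le_or_gt lam x with hlx | hxl
  · exact (mul_nonpos_of_nonneg_of_nonpos hq
      (mul_nonpos_of_nonpos_of_nonneg (by linarith) hS)).trans zero_le_one
  calc _ ≤ (1 - poissonTail lam y) * ((lam - y) * steinSeries lam (y + 1)) := by
        refine mul_le_mul_of_nonneg_left (mul_le_mul (by linarith) ?_ hS (by linarith)) hq
        exact (steinSeries_strictAntiOn hlam).antitoneOn (show (0 : ℝ) < y + 1 by positivity) hx
          (by linarith)
    _ = Real.exp (-lam) * ((lam - y) * ∑ k ∈ range y, lam ^ k / k !) *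
          steinSeries lam (y + 1) := by
        rw [one_sub_poissonTail]; ring
    _ ≤ Real.exp (-lam) * (y * (lam ^ y / y !)) * steinSeries lam (y + 1) := by
        gcongr Real.exp (-lam) * ?_ * _
        · exact steinSeries_nonneg hlam (by positivity)
        · exact sub_mul_sum_range_pow_div_factorial_le hlam y
    _ ≤ Real.exp (-lam) * Real.exp lam := by
        rw [mul_assoc]
        gcongr
        exact natCast_mul_pow_div_factorial_mul_steinSeries_le hlam y
    _ = 1 := by rw [← Real.exp_add, neg_add_cancel, Real.exp_zero]

lemma fh_eq_of_mul_le {lam w : ℝ} {m y : ℕ} (hm : 0 < m) (hw : m * y ≤ w) :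
    fh lam m y w = -((1 - poissonTail lam y) * steinSeries lam (w / m) / m) := by
  have hmR : (0 : ℝ) < m := by exact_mod_cast hm
  rw [fh, steinSeries, mul_div_assoc, ← tsum_div_const, ← tsum_mul_left]
  congr 1
  refine tsum_congr fun j => ?_
  rw [if_pos (hw.trans (le_add_of_nonneg_right (by positivity)))]
  have hprod :
      ∏ ℓ ∈ range (j + 1), (w + m * ℓ) = ∏ ℓ ∈ range (j + 1), (m * (w / m + ℓ)) :=
    prod_congr rfl fun ℓ _ => by field_simp
  rw [hprod, prod_mul_distrib, prod_const, card_range, mul_pow, pow_succ]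
  field_simp

/-- **Increments of the Stein solution above the threshold.**
For each positive integer `m` there exists a constant `C > 0`, independent of `w`, `y` and `λ`,
such that for every `λ > 0`, every positive integer `y`, every real `w ≥ m·y` and every
`l ∈ {1, 2, …, m}`, one has `0 < f_h(w + l) − f_h(w) ≤ C / w`. -/
theorem fh_increment_bound_above_threshold (m : ℕ) (hm : 0 < m) :
    ∃ C : ℝ, 0 < C ∧ ∀ (lam : ℝ), 0 < lam → ∀ (y : ℕ), 0 < y →
      ∀ w : ℝ, (m : ℝ) * y ≤ w → ∀ l : ℕ, 1 ≤ l → l ≤ m →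
        0 < fh lam m y (w + l) - fh lam m y w ∧
        fh lam m y (w + l) - fh lam m y w ≤ C / w := by
  refine ⟨2, two_pos, fun lam hlam y hy w hw l hl hlm => ?_⟩
  have hmR : (0 : ℝ) < m := by exact_mod_cast hm
  obtain ⟨x, rfl⟩ : ∃ x, w = m * x := ⟨w / m, by field_simp⟩
  have hyx : (y : ℝ) ≤ x := le_of_mul_le_mul_left hw hmR
  have hx : 0 < x := lt_of_lt_of_le (by exact_mod_cast hy) hyx
  have ht : 0 < (l : ℝ) / m := by positivity
  have hq := one_sub_poissonTail_pos hlam.le hy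
  have hdiff : fh lam m y (m * x + l) - fh lam m y (m * x) =
      (1 - poissonTail lam y) * (steinSeries lam x - steinSeries lam (x + l / m)) / m := by
    rw [fh_eq_of_mul_le hm hw, fh_eq_of_mul_le hm (by linarith [l.cast_nonneg (α := ℝ)]),
      add_div, mul_div_cancel_left₀ x hmR.ne']
    ring
  rw [hdiff]
  constructor
  · have := steinSeries_strictAntiOn hlam.le hx (by positivity : 0 < x + l / m)
      (lt_add_of_pos_right x ht)
    have := sub_pos.2 this
    positivity
  calc _ ≤ (1 - poissonTail lam y) * ((1 + (lam - x) * steinSeries lam (x + 1)) / x) / m := by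
        gcongr
        exact steinSeries_sub_le hlam.le hx ht.le
          (div_le_one_of_le₀ (by exact_mod_cast hlm) hmR.le)
    _ = ((1 - poissonTail lam y) + (1 - poissonTail lam y) *
          ((lam - x) * steinSeries lam (x + 1))) / (m * x) := by
        field_simp
    _ ≤ 2 / (m * x) := by
        gcongr
        linarith [one_sub_poissonTail_mul_sub_mul_steinSeries_le hlam.le hyx,
          poissonTail_nonneg hlam.le y]
end

section
/- Recurrence for the Stein solution below the threshold: for every real w with 0 < w < my, f_h(w + m) − f_h(w) = f_h(w)·(w/(λm) − 1) − P(Â_λ ≥ my)/(λm). -/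
/-!
`f_h` is the Stein solution `F(w) = -∑ⱼ tⱼ(w) (h(w + cj) - p)` with weights
`tⱼ(w) = (λc)ʲ / ∏_{ℓ ≤ j} (w + cℓ)`, where `c = m`. Splitting off the factor `w` of the
product gives `λc · tⱼ(w + c) = w · tⱼ₊₁(w)`, so the series for `F(w + c)` is the tail of the
series for `F(w)`. This yields the Stein equation `λc F(w + c) - w F(w) = h(w) - p`, and below
the threshold `h(w) = 0`.
-/

open Finset Nat

namespace SteinPoisson

noncomputable def weight (lam c w : ℝ) (j : ℕ) : ℝ :=
  (lam * c) ^ j / ∏ ℓ ∈ range (j + 1), (w + c * ℓ)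

noncomputable def solution (lam c : ℝ) (h : ℝ → ℝ) (p w : ℝ) : ℝ :=
  -∑' j : ℕ, weight lam c w j * (h (w + c * j) - p)

variable {lam c w : ℝ}

@[simp]
theorem weight_zero : weight lam c w 0 = w⁻¹ := by
  simp [weight]

theorem weight_succ (j : ℕ) :
    weight lam c w (j + 1) = weight lam c w j * (lam * c / (w + c * (j + 1 : ℕ))) := by
  rw [weight, weight, prod_range_succ, pow_succ, mul_div_mul_comm]

theorem abs_weight_le (hc : 0 ≤ c) (hw : 0 < w) (j : ℕ) :
    |weight lam c w j| ≤ |lam| ^ j / j ! / w := by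
  induction j with
  | zero => simp [abs_of_pos hw]
  | succ j ih =>
    have hden : 0 < w + c * (j + 1 : ℕ) := by positivity
    have hratio : |lam * c / (w + c * (j + 1 : ℕ))| ≤ |lam| / (j + 1 : ℕ) := by
      rw [abs_div, abs_mul, abs_of_nonneg hc, abs_of_pos hden,
        div_le_div_iff₀ hden (by positivity)]
      have : c * (j + 1 : ℕ) ≤ w + c * (j + 1 : ℕ) := by linarith
      nlinarith [abs_nonneg lam]
    calc |weight lam c w (j + 1)|
        = |weight lam c w j| * |lam * c / (w + c * (j + 1 : ℕ))| := by
          rw [weight_succ, abs_mul]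
      _ ≤ |lam| ^ j / j ! / w * (|lam| / (j + 1 : ℕ)) := by gcongr
      _ = |lam| ^ (j + 1) / (j + 1)! / w := by
          rw [Nat.factorial_succ, Nat.cast_mul, pow_succ]
          field_simp

theorem summable_weight_mul {b : ℕ → ℝ} {B : ℝ} (hc : 0 ≤ c) (hw : 0 < w)
    (hb : ∀ j, |b j| ≤ B) : Summable fun j => weight lam c w j * b j := by
  refine .of_norm_bounded ((Real.summable_pow_div_factorial |lam|).div_const w |>.mul_right B)
    fun j => ?_
  rw [Real.norm_eq_abs, abs_mul]
  exact mul_le_mul (abs_weight_le hc hw j) (hb j) (abs_nonneg _) (by positivity)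

theorem mul_weight_add_step (hw : w ≠ 0) (j : ℕ) :
    lam * c * weight lam c (w + c) j = w * weight lam c w (j + 1) := by
  have hprod : ∏ ℓ ∈ range (j + 2), (w + c * ℓ) = w * ∏ ℓ ∈ range (j + 1), (w + c + c * ℓ) := by
    rw [prod_range_succ', mul_comm, Nat.cast_zero, mul_zero, add_zero]
    congr 1
    exact prod_congr rfl fun ℓ _ => by push_cast; ring
  rw [weight, weight, hprod, pow_succ]
  field_simp

theorem solution_stein_equation {h : ℝ → ℝ} {B : ℝ} (hh : ∀ v, |h v| ≤ B) (p : ℝ)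
    (hc : 0 ≤ c) (hw : 0 < w) :
    lam * c * solution lam c h p (w + c) - w * solution lam c h p w = h w - p := by
  set a : ℕ → ℝ := fun j => weight lam c w j * (h (w + c * j) - p)
  have ha : Summable a :=
    summable_weight_mul hc hw fun j => (abs_sub _ _).trans (add_le_add (hh _) le_rfl)
  have hshift : ∀ j : ℕ,
      lam * c * (weight lam c (w + c) j * (h (w + c + c * j) - p)) = w * a (j + 1) := by
    intro j
    rw [← mul_assoc, mul_weight_add_step hw.ne', mul_assoc,
      show w + c + c * j = w + c * (j + 1 : ℕ) by push_cast; ring]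
  have hsplit : ∑' j, a j = a 0 + ∑' j, a (j + 1) := ha.tsum_eq_zero_add
  have ha0 : w * a 0 = h w - p := by
    simp [a, hw.ne']
  have hF : lam * c * solution lam c h p (w + c) = -(w * ∑' j, a (j + 1)) := by
    simp only [solution, mul_neg, ← tsum_mul_left, hshift]
  rw [hF, solution, hsplit]
  linear_combination ha0

end SteinPoisson

theorem fh_eq_solution (lam : ℝ) (m y : ℕ) :
    fh lam m y = SteinPoisson.solution lam m (fun v => if (m : ℝ) * y ≤ v then 1 else 0)
      (poissonTail lam y) :=
  rfl

theorem fh_recurrence_below_threshold_general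
    (lam : ℝ) (hlam : 0 < lam) (m : ℕ) (y : ℕ) :
    ∀ w : ℝ, 0 < w → w < (m : ℝ) * y →
      fh lam m y (w + m) - fh lam m y w =
        fh lam m y w * (w / (lam * m) - 1) - poissonTail lam y / (lam * m) := by
  intro w hw hwy
  have hm : (m : ℝ) ≠ 0 := by
    rintro hm
    rw [hm, zero_mul] at hwy
    exact hwy.not_gt hw
  have hstein := SteinPoisson.solution_stein_equation (lam := lam)
    (h := fun v => if (m : ℝ) * y ≤ v then 1 else 0) (B := 1) (fun v => by split_ifs <;> simp)
    (poissonTail lam y) m.cast_nonneg hw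
  rw [if_neg hwy.not_ge] at hstein
  rw [fh_eq_solution]
  field_simp [hlam.ne']
  linear_combination hstein

/-- **Recurrence for the Stein solution below the threshold.**
For `λ > 0`, positive integers `m, y`, and every real `w` with `0 < w < m·y`,
`f_h(w + m) − f_h(w) = f_h(w)·(w/(λm) − 1) − P(Â_λ ≥ m·y)/(λm)`. -/
theorem fh_recurrence_below_threshold
    (lam : ℝ) (hlam : 0 < lam) (m : ℕ) (hm : 0 < m) (y : ℕ) (hy : 0 < y) :
    ∀ w : ℝ, 0 < w → w < (m : ℝ) * y →
      fh lam m y (w + m) - fh lam m y w =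
        fh lam m y w * (w / (lam * m) - 1) - poissonTail lam y / (lam * m) :=
  fh_recurrence_below_threshold_general lam hlam m y
end

section
/- Tail-sum estimates: let λ > 0, let m be a positive integer, let w be a real number with w ≥ m, and let j' ≥ 0 be an integer. Then (e^λ · ⌊w/m⌋! / (m·λ^{⌊w/m⌋+1})) · P(A_λ ≥ j' + ⌊w/m⌋ + 2) ≤ Σ_{j=j'+1}^∞ (λm)^j / (∏_{ℓ=0}^j (w + mℓ)) ≤ (e^λ · (⌊w/m⌋ − 1)! / (m·λ^{⌊w/m⌋})) · P(A_λ ≥ j' + ⌊w/m⌋ + 1). -/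
open Finset Real Nat

noncomputable def poissonWeight (lam : ℝ) (n : ℕ) : ℝ := exp (-lam) * lam ^ n / n !

lemma poissonTail_add_eq_tsum (lam : ℝ) (b a : ℕ) :
    poissonTail lam (b + a) = ∑' j, if b ≤ j then poissonWeight lam (j + a) else 0 := by
  rw [poissonTail, ← (add_left_injective a).tsum_eq]
  · exact tsum_congr fun j => by simp only [add_le_add_iff_right, poissonWeight]
  · intro n hn
    exact ⟨n - a, Nat.sub_add_cancel (by by_contra h; exact hn (if_neg (by omega)))⟩

lemma summable_ite_poissonWeight_add (lam : ℝ) (b a : ℕ) :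
    Summable fun j => if b ≤ j then poissonWeight lam (j + a) else 0 := by
  have h := (summable_nat_add_iff a).2 (Real.summable_pow_div_factorial lam)
  refine (h.mul_left (exp (-lam))).abs.of_norm_bounded fun j => ?_
  split_ifs
  · simp [poissonWeight, mul_div_assoc, abs_div, abs_mul]
  · simp only [norm_zero]; positivity

lemma prod_range_mul_natCast_add_mul (m : ℝ) (a j : ℕ) :
    ∏ ℓ ∈ range j, (m * a + m * ℓ) = m ^ j * a.ascFactorial j := by
  rw [Nat.ascFactorial_eq_prod_range]
  push_cast
  simp only [← mul_add, prod_mul_distrib, prod_const, card_range]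

lemma prod_range_add_mul_le_of_le {m w w' : ℝ} (hm : 0 ≤ m) (hw : 0 ≤ w) (hww' : w ≤ w')
    (j : ℕ) : ∏ ℓ ∈ range j, (w + m * ℓ) ≤ ∏ ℓ ∈ range j, (w' + m * ℓ) :=
  prod_le_prod (fun ℓ _ => by positivity) (fun ℓ _ => by linarith)

lemma exp_mul_factorial_div_mul_poissonWeight {lam m : ℝ} (hlam : lam ≠ 0) (hm : m ≠ 0)
    (a j : ℕ) :
    exp lam * a ! / (m * lam ^ (a + 1)) * poissonWeight lam (j + (a + 1)) =
      (lam * m) ^ j / ∏ ℓ ∈ range (j + 1), (m * (a + 1 : ℕ) + m * ℓ) := by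
  have hfac : (a ! : ℝ) * (a + 1).ascFactorial (j + 1) = (a + (j + 1))! := by
    exact_mod_cast Nat.factorial_mul_ascFactorial a (j + 1)
  rw [prod_range_mul_natCast_add_mul, poissonWeight, show j + (a + 1) = a + (j + 1) by omega,
    ← hfac, exp_neg]
  field_simp
  ring

section Bounds

variable {lam m w : ℝ}

lemma exp_mul_factorial_div_mul_poissonWeight_le (hlam : 0 < lam) (hm : 0 < m)
    {a : ℕ} (hw : 0 < w) (haw : w ≤ m * (a + 1 : ℕ)) (j : ℕ) :
    exp lam * a ! / (m * lam ^ (a + 1)) * poissonWeight lam (j + (a + 1)) ≤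
      (lam * m) ^ j / ∏ ℓ ∈ range (j + 1), (w + m * ℓ) := by
  rw [exp_mul_factorial_div_mul_poissonWeight hlam.ne' hm.ne']
  exact div_le_div_of_nonneg_left (by positivity) (prod_pos fun ℓ _ => by positivity)
    (prod_range_add_mul_le_of_le hm.le hw.le haw _)

lemma le_exp_mul_factorial_div_mul_poissonWeight (hlam : 0 < lam) (hm : 0 < m)
    {a : ℕ} (ha : 1 ≤ a) (haw : m * a ≤ w) (j : ℕ) :
    (lam * m) ^ j / ∏ ℓ ∈ range (j + 1), (w + m * ℓ) ≤
      exp lam * (a - 1)! / (m * lam ^ a) * poissonWeight lam (j + a) := by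
  obtain ⟨a, rfl⟩ := Nat.exists_eq_add_of_le' ha
  rw [Nat.add_sub_cancel, exp_mul_factorial_div_mul_poissonWeight hlam.ne' hm.ne']
  exact div_le_div_of_nonneg_left (by positivity) (prod_pos fun ℓ _ => by positivity)
    (prod_range_add_mul_le_of_le hm.le (by positivity) haw _)

lemma summable_tail (hlam : 0 < lam) (hm : 0 < m) (hmw : m ≤ w) (b : ℕ) :
    Summable fun j => if b ≤ j then (lam * m) ^ j / ∏ ℓ ∈ range (j + 1), (w + m * ℓ) else 0 := by
  refine .of_nonneg_of_le (fun j => ?_) (fun j => ?_)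
    ((summable_ite_poissonWeight_add lam b 1).mul_left (exp lam * (1 - 1)! / (m * lam ^ 1)))
  · have : 0 < w := hm.trans_le hmw
    split_ifs <;> positivity
  · rw [mul_ite, mul_zero]
    split_ifs
    · exact le_exp_mul_factorial_div_mul_poissonWeight hlam hm le_rfl (by simpa using hmw) j
    · rfl

lemma exp_mul_factorial_div_mul_poissonTail_le_tsum (hlam : 0 < lam) (hm : 0 < m) (hmw : m ≤ w)
    {a : ℕ} (haw : w ≤ m * (a + 1 : ℕ)) (b : ℕ) :
    exp lam * a ! / (m * lam ^ (a + 1)) * poissonTail lam (b + (a + 1)) ≤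
      ∑' j, if b ≤ j then (lam * m) ^ j / ∏ ℓ ∈ range (j + 1), (w + m * ℓ) else 0 := by
  rw [poissonTail_add_eq_tsum, ← tsum_mul_left]
  refine ((summable_ite_poissonWeight_add lam b _).mul_left _).tsum_le_tsum (fun j => ?_)
    (summable_tail hlam hm hmw b)
  rw [mul_ite, mul_zero]
  split_ifs
  · exact exp_mul_factorial_div_mul_poissonWeight_le hlam hm (hm.trans_le hmw) haw j
  · rfl

lemma tsum_le_exp_mul_factorial_div_mul_poissonTail (hlam : 0 < lam) (hm : 0 < m) {a : ℕ}
    (ha : 1 ≤ a) (haw : m * a ≤ w) (b : ℕ) :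
    ∑' j, (if b ≤ j then (lam * m) ^ j / ∏ ℓ ∈ range (j + 1), (w + m * ℓ) else 0) ≤
      exp lam * (a - 1)! / (m * lam ^ a) * poissonTail lam (b + a) := by
  have hmw : m ≤ w := le_trans (le_mul_of_one_le_right hm.le (by exact_mod_cast ha)) haw
  rw [poissonTail_add_eq_tsum, ← tsum_mul_left]
  refine (summable_tail hlam hm hmw b).tsum_le_tsum (fun j => ?_)
    ((summable_ite_poissonWeight_add lam b _).mul_left _)
  rw [mul_ite, mul_zero]
  split_ifs
  · exact le_exp_mul_factorial_div_mul_poissonWeight hlam hm ha haw j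
  · rfl

end Bounds

/-- **Tail-sum estimates.**
Let `λ > 0`, `m` a positive integer, `w ≥ m` real, and `j' ≥ 0` an integer.  Then
`(e^λ · ⌊w/m⌋! / (m·λ^{⌊w/m⌋+1})) · P(A_λ ≥ j' + ⌊w/m⌋ + 2)`
`  ≤ Σ_{j=j'+1}^∞ (λm)^j / (∏_{ℓ=0}^j (w + mℓ))`
`  ≤ (e^λ · (⌊w/m⌋ − 1)! / (m·λ^{⌊w/m⌋})) · P(A_λ ≥ j' + ⌊w/m⌋ + 1)`. -/
theorem tail_sum_estimates
    (lam : ℝ) (hlam : 0 < lam) (m : ℕ) (hm : 0 < m) (w : ℝ) (hw : (m : ℝ) ≤ w) (j' : ℕ) :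
    Real.exp lam * (Nat.factorial ⌊w / m⌋₊) / ((m : ℝ) * lam ^ (⌊w / m⌋₊ + 1)) *
        poissonTail lam (j' + ⌊w / m⌋₊ + 2) ≤
      (∑' j : ℕ, if j' + 1 ≤ j then
        (lam * m) ^ j / (∏ ℓ ∈ Finset.range (j + 1), (w + (m : ℝ) * ℓ)) else 0) ∧
    (∑' j : ℕ, if j' + 1 ≤ j then
        (lam * m) ^ j / (∏ ℓ ∈ Finset.range (j + 1), (w + (m : ℝ) * ℓ)) else 0) ≤
      Real.exp lam * (Nat.factorial (⌊w / m⌋₊ - 1)) / ((m : ℝ) * lam ^ (⌊w / m⌋₊)) *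
        poissonTail lam (j' + ⌊w / m⌋₊ + 1) := by
  have hm' : (0 : ℝ) < m := by exact_mod_cast hm
  set k := ⌊w / m⌋₊
  have hk : 1 ≤ k := Nat.le_floor (by simpa using (one_le_div hm').2 hw)
  have hkw : (m : ℝ) * k ≤ w :=
    (le_div_iff₀' hm').1 (Nat.floor_le (div_nonneg (hm'.le.trans hw) hm'.le))
  have hwk : w ≤ (m : ℝ) * (k + 1 : ℕ) := by
    push_cast
    exact ((div_lt_iff₀' hm').1 (Nat.lt_floor_add_one _)).le
  constructor
  · rw [show j' + k + 2 = j' + 1 + (k + 1) by omega]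
    exact exp_mul_factorial_div_mul_poissonTail_le_tsum hlam hm' hw hwk _
  · rw [show j' + k + 1 = j' + 1 + k by omega]
    exact tsum_le_exp_mul_factorial_div_mul_poissonTail hlam hm' hk hkw _
end

section
/- Head-sum estimate: let λ > 0, let m be a positive integer, let w be a real number with w ≥ m, and let j' ≥ 0 be an integer. Then Σ_{j=0}^{j'} (λm)^j / (∏_{ℓ=0}^j (w + mℓ)) ≤ (e^λ · (⌊w/m⌋ − 1)! / (m·λ^{⌊w/m⌋})) · P(⌊w/m⌋ ≤ A_λ < j' + ⌊w/m⌋ + 1). -/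
/-!
With `k = ⌊w/m⌋ ≥ 1` we have `w + mℓ ≥ m(k + ℓ)`, so the `j`-th term of the head sum is at most
`(λm)^j / (m^{j+1} k(k+1)⋯(k+j)) = (k-1)! λ^j / (m (k+j)!)`. After the factor
`e^λ (k-1)! / (m λ^k)` this is exactly the Poisson weight `e^{-λ} λ^{k+j} / (k+j)!`, and these
weights for `j ≤ j'` make up `P(k ≤ A_λ < k + j' + 1)`.
-/

open Finset

theorem tsum_ite_mem_Ico_eq_sum_range {M : Type*} [AddCommMonoid M] [TopologicalSpace M]
    (f : ℕ → M) (k n : ℕ) :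
    ∑' j, (if k ≤ j ∧ j < n + k then f j else 0) = ∑ j ∈ range n, f (k + j) := by
  rw [tsum_eq_sum (s := Ico k (n + k)) fun j hj => if_neg (by simpa using hj),
    sum_Ico_eq_sum_range, Nat.add_sub_cancel]
  exact sum_congr rfl fun j hj => if_pos ⟨by omega, by simp at hj; omega⟩

theorem pow_mul_ascFactorial_le_prod {m k : ℕ} {w : ℝ} (hmk : (m : ℝ) * k ≤ w) (j : ℕ) :
    (m : ℝ) ^ j * k.ascFactorial j ≤ ∏ ℓ ∈ range j, (w + m * ℓ) := by
  rw [Nat.ascFactorial_eq_prod_range, Nat.cast_prod, pow_eq_prod_const, ← prod_mul_distrib]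
  refine prod_le_prod (fun ℓ _ => by positivity) fun ℓ _ => ?_
  push_cast
  linarith

theorem mul_pow_div_prod_le_factorial {lam : ℝ} (hlam : 0 ≤ lam) {m k : ℕ} (hm : 0 < m) (hk : 0 < k) {w : ℝ}
    (hmk : (m : ℝ) * k ≤ w) (j : ℕ) :
    (lam * m) ^ j / ∏ ℓ ∈ range (j + 1), (w + m * ℓ) ≤
      (k - 1).factorial * lam ^ j / (m * (k + j).factorial) := by
  have hfac : ((k - 1).factorial * k.ascFactorial (j + 1) : ℝ) = (k + j).factorial := by
    exact_mod_cast Nat.factorial_mul_ascFactorial' k (j + 1) hk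
  have hasc : (0 : ℝ) < k.ascFactorial (j + 1) := by
    have := Nat.ascFactorial_pos (k - 1) (j + 1)
    rw [Nat.sub_add_cancel hk] at this
    exact_mod_cast this
  calc (lam * m) ^ j / ∏ ℓ ∈ range (j + 1), (w + m * ℓ)
      ≤ (lam * m) ^ j / (m ^ (j + 1) * k.ascFactorial (j + 1)) :=
        div_le_div_of_nonneg_left (by positivity) (by positivity)
          (pow_mul_ascFactorial_le_prod hmk (j + 1))
    _ = (k - 1).factorial * lam ^ j / (m * (k + j).factorial) := by
        rw [← hfac]
        field_simp
        ring

theorem exp_mul_div_mul_poisson_weight {lam : ℝ} (hlam : lam ≠ 0) (m k j : ℕ) :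
    Real.exp lam * (k - 1).factorial / (m * lam ^ k) *
        (Real.exp (-lam) * lam ^ (k + j) / (k + j).factorial) =
      (k - 1).factorial * lam ^ j / (m * (k + j).factorial) := by
  rw [Real.exp_neg, pow_add]
  field_simp

/-- **Head-sum estimate.**
Let `λ > 0`, `m` a positive integer, `w ≥ m` real, and `j' ≥ 0` an integer.  Then
`Σ_{j=0}^{j'} (λm)^j / (∏_{ℓ=0}^j (w + mℓ))`
`  ≤ (e^λ · (⌊w/m⌋ − 1)! / (m·λ^{⌊w/m⌋})) · P(⌊w/m⌋ ≤ A_λ < j' + ⌊w/m⌋ + 1)`,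
where `A_λ` is a Poisson random variable with mean `λ`, whose probability mass function is
`e^{-λ} λ^j / j!`. -/
theorem head_sum_estimate
    (lam : ℝ) (hlam : 0 < lam) (m : ℕ) (hm : 0 < m) (w : ℝ) (hw : (m : ℝ) ≤ w) (j' : ℕ) :
    (∑ j ∈ Finset.range (j' + 1),
        (lam * m) ^ j / (∏ ℓ ∈ Finset.range (j + 1), (w + (m : ℝ) * ℓ))) ≤
      Real.exp lam * (Nat.factorial (⌊w / m⌋₊ - 1)) / ((m : ℝ) * lam ^ (⌊w / m⌋₊)) *
        (∑' j : ℕ, if ⌊w / m⌋₊ ≤ j ∧ j < j' + ⌊w / m⌋₊ + 1 then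
          Real.exp (-lam) * lam ^ j / (Nat.factorial j) else 0) := by
  set k := ⌊w / m⌋₊
  have hm' : (0 : ℝ) < m := by exact_mod_cast hm
  have hk : 0 < k := Nat.floor_pos.mpr ((one_le_div hm').mpr hw)
  have hmk : (m : ℝ) * k ≤ w := by
    rw [mul_comm, ← le_div_iff₀ hm']
    exact Nat.floor_le (div_nonneg (hm'.le.trans hw) hm'.le)
  rw [show j' + k + 1 = (j' + 1) + k by omega, tsum_ite_mem_Ico_eq_sum_range, mul_sum]
  refine sum_le_sum fun j _ => ?_
  rw [exp_mul_div_mul_poisson_weight hlam.ne']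
  exact mul_pow_div_prod_le_factorial hlam.le hm hk hmk j
end
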